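/- arXiv:2511.00921 — 11 statements merged into one kernel-verified Lean document; each statement's English description precedes it below -/
import Mathlib

section
/- Let w be a positive integer and let {F_1,…,F_k} be a set of mutually orthogonal binary frequency squares, where F_t has type (n;λ_{0,t},λ_{1,t}) for 1 ≤ t ≤ k. Suppose there are nonnegative integers x_1,x_2,x_3,x_4 with x_1 + x_4 ≡ x_2 + x_3 (mod w), a set A of rows with |A| = a and a set C of columns with |C| = b, such that the entry of the ℤ-sum of the F_t in cell (i,j) is congruent mod w to x_1 if i∈A and j∈C, to x_2 if i∈A and j∉C, to x_3 if i∉A and j∈C, and to x_4 if i∉A and j∉C. If F is a frequency square of type (n;μ_0,μ_1,…,μ_{m−1}) that is orthogonal to every F_t, then for all 0 ≤ i < m: μ_i·(Σ_{t=1}^k λ_{1,t}) ≡ a·μ_i·(x_2−x_4) + b·μ_i·(x_3−x_4) + μ_i·n·x_4 (mod w). -/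
open Finset

/-- A binary frequency square of type `(n; n - lam1, lam1)`: an `n × n` `(0,1)`-matrix
with exactly `lam1` ones (hence `n - lam1` zeros) in every row and every column. -/
def IsBFS (n lam1 : ℕ) (F : Fin n → Fin n → ℕ) : Prop :=
  (∀ i j, F i j = 0 ∨ F i j = 1) ∧
  (∀ i : Fin n, (univ.filter (fun j => F i j = 1)).card = lam1) ∧
  (∀ j : Fin n, (univ.filter (fun i => F i j = 1)).card = lam1)

/-- Two binary frequency squares (with `lam1` resp. `mu1` ones per row and column)
are orthogonal: the number of cells in which both have entry 1 equals `lam1 * mu1`. -/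
def OrthBFS (n lam1 mu1 : ℕ) (F G : Fin n → Fin n → ℕ) : Prop :=
  ((univ : Finset (Fin n × Fin n)).filter
    (fun p => F p.1 p.2 = 1 ∧ G p.1 p.2 = 1)).card = lam1 * mu1

/-- A frequency square of type `(n; mu 0, …, mu (m-1))`: an `n × n` matrix with entries
in `Fin m` in which symbol `s` occurs exactly `mu s` times in each row and each column. -/
def IsFS (n m : ℕ) (mu : Fin m → ℕ) (G : Fin n → Fin n → Fin m) : Prop :=
  (∀ i : Fin n, ∀ s : Fin m, (univ.filter (fun j => G i j = s)).card = mu s) ∧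
  (∀ j : Fin n, ∀ s : Fin m, (univ.filter (fun i => G i j = s)).card = mu s)


lemma rowcount {n : ℕ} (c : ℕ) (P : Fin n → Fin n → Prop) [∀ i j, Decidable (P i j)]
    (A : Finset (Fin n)) (h : ∀ i ∈ A, (univ.filter (fun j => P i j)).card = c) :
    ((univ : Finset (Fin n × Fin n)).filter (fun p => P p.1 p.2 ∧ p.1 ∈ A)).card
      = A.card * c := by
  rw [Finset.card_filter, Fintype.sum_prod_type]
  have key : ∀ i : Fin n, (∑ j, if P i j ∧ i ∈ A then 1 else 0) = if i ∈ A then c else 0 := by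
    intro i
    by_cases hi : i ∈ A
    · simp only [hi, and_true, if_true]
      rw [← h i hi, Finset.card_filter]
    · simp [hi]
  simp_rw [key]
  rw [Finset.sum_ite_mem, Finset.univ_inter, Finset.sum_const, smul_eq_mul]

lemma colcount {n : ℕ} (c : ℕ) (P : Fin n → Fin n → Prop) [∀ i j, Decidable (P i j)]
    (C : Finset (Fin n)) (h : ∀ j ∈ C, (univ.filter (fun i => P i j)).card = c) :
    ((univ : Finset (Fin n × Fin n)).filter (fun p => P p.1 p.2 ∧ p.2 ∈ C)).card
      = C.card * c := by
  rw [Finset.card_filter, Fintype.sum_prod_type, Finset.sum_comm]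
  have key : ∀ j : Fin n, (∑ i, if P i j ∧ j ∈ C then 1 else 0) = if j ∈ C then c else 0 := by
    intro j
    by_cases hj : j ∈ C
    · simp only [hj, and_true, if_true]
      rw [← h j hj, Finset.card_filter]
    · simp [hj]
  simp_rw [key]
  rw [Finset.sum_ite_mem, Finset.univ_inter, Finset.sum_const, smul_eq_mul]

/-- Theorem (block structure / extension congruence).  If the `ℤ`-sum of a set of binary
MOFS `F 1, …, F k` is, modulo `w`, constant equal to `x1, x2, x3, x4` on the four blocks
determined by a row set `A` (with `|A| = a`) and a column set `C` (with `|C| = b`), where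
`x1 + x4 ≡ x2 + x3 (mod w)`, and `G` is a frequency square of type `(n; mu 0, …, mu (m-1))`
orthogonal to every `F t`, then for every symbol `s`,
`mu s * Σ_t lam1 t ≡ a * mu s * (x2 - x4) + b * mu s * (x3 - x4) + mu s * n * x4 (mod w)`. -/
theorem stmt0 (w k n m : ℕ) (hw : 0 < w)
    (lam0 lam1 : Fin k → ℕ) (F : Fin k → Fin n → Fin n → ℕ)
    (hlam : ∀ t, lam0 t + lam1 t = n)
    (hF : ∀ t, IsBFS n (lam1 t) (F t))
    (hMO : ∀ s t, s ≠ t → OrthBFS n (lam1 s) (lam1 t) (F s) (F t))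
    (x1 x2 x3 x4 : ℕ)
    (hx : ((x1 : ℤ) + x4) ≡ ((x2 : ℤ) + x3) [ZMOD (w : ℤ)])
    (A C : Finset (Fin n)) (a b : ℕ) (ha : A.card = a) (hb : C.card = b)
    (h11 : ∀ i ∈ A, ∀ j ∈ C, (∑ t, (F t i j : ℤ)) ≡ (x1 : ℤ) [ZMOD (w : ℤ)])
    (h12 : ∀ i ∈ A, ∀ j ∉ C, (∑ t, (F t i j : ℤ)) ≡ (x2 : ℤ) [ZMOD (w : ℤ)])
    (h21 : ∀ i ∉ A, ∀ j ∈ C, (∑ t, (F t i j : ℤ)) ≡ (x3 : ℤ) [ZMOD (w : ℤ)])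
    (h22 : ∀ i ∉ A, ∀ j ∉ C, (∑ t, (F t i j : ℤ)) ≡ (x4 : ℤ) [ZMOD (w : ℤ)])
    (mu : Fin m → ℕ) (G : Fin n → Fin n → Fin m)
    (hG : IsFS n m mu G)
    (hOrth : ∀ t : Fin k, ∀ s : Fin m,
      ((univ : Finset (Fin n × Fin n)).filter
        (fun p => G p.1 p.2 = s ∧ F t p.1 p.2 = 1)).card = mu s * lam1 t ∧
      ((univ : Finset (Fin n × Fin n)).filter
        (fun p => G p.1 p.2 = s ∧ F t p.1 p.2 = 0)).card = mu s * lam0 t) :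
    ∀ s : Fin m,
      ((mu s : ℤ) * ∑ t, (lam1 t : ℤ)) ≡
        ((a : ℤ) * (mu s : ℤ) * ((x2 : ℤ) - (x4 : ℤ)) +
         (b : ℤ) * (mu s : ℤ) * ((x3 : ℤ) - (x4 : ℤ)) +
         (mu s : ℤ) * (n : ℤ) * (x4 : ℤ)) [ZMOD (w : ℤ)] := by
  intro s
  classical
  obtain ⟨hGrow, hGcol⟩ := hG
  set T : Finset (Fin n × Fin n) := univ.filter (fun p => G p.1 p.2 = s) with hT
  set f : Fin n × Fin n → ℤ := fun p => ∑ t, (F t p.1 p.2 : ℤ) with hf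
  have eA : (T.filter (fun p => p.1 ∈ A)).card = a * mu s := by
    rw [hT, Finset.filter_filter,
      rowcount (mu s) (fun i j => G i j = s) A (fun i _ => hGrow i s), ha]
  have eAn : (T.filter (fun p => ¬ p.1 ∈ A)).card = T.card - a * mu s := by
    have := Finset.card_filter_add_card_filter_not (s := T)
      (p := fun p => p.1 ∈ A)
    omega
  have eC : (T.filter (fun p => p.2 ∈ C)).card = b * mu s := by
    rw [hT, Finset.filter_filter,
      colcount (mu s) (fun i j => G i j = s) C (fun j _ => hGcol j s), hb]
  have eT : T.card = n * mu s := by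
    have h0 := rowcount (mu s) (fun i j => G i j = s) (univ : Finset (Fin n))
      (fun i _ => hGrow i s)
    simp only [Finset.mem_univ, and_true, Finset.card_univ, Fintype.card_fin] at h0
    rw [hT]
    exact h0
  set c11 := (T.filter (fun p => p.1 ∈ A ∧ p.2 ∈ C)).card with hc11
  set c12 := (T.filter (fun p => p.1 ∈ A ∧ ¬ p.2 ∈ C)).card with hc12
  set c21 := (T.filter (fun p => ¬ p.1 ∈ A ∧ p.2 ∈ C)).card with hc21
  set c22 := (T.filter (fun p => ¬ p.1 ∈ A ∧ ¬ p.2 ∈ C)).card with hc22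
  have e1 : c11 + c12 = a * mu s := by
    rw [hc11, hc12, ← Finset.filter_filter, ← Finset.filter_filter,
      Finset.card_filter_add_card_filter_not, eA]
  have e2 : c11 + c21 = b * mu s := by
    have comm1 : T.filter (fun p => p.1 ∈ A ∧ p.2 ∈ C)
        = T.filter (fun p => p.2 ∈ C ∧ p.1 ∈ A) := by
      apply Finset.filter_congr; intro p _; constructor <;> exact fun h => ⟨h.2, h.1⟩
    have comm2 : T.filter (fun p => ¬ p.1 ∈ A ∧ p.2 ∈ C)
        = T.filter (fun p => p.2 ∈ C ∧ ¬ p.1 ∈ A) := by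
      apply Finset.filter_congr; intro p _; constructor <;> exact fun h => ⟨h.2, h.1⟩
    rw [hc11, hc21, comm1, comm2, ← Finset.filter_filter, ← Finset.filter_filter,
      Finset.card_filter_add_card_filter_not, eC]
  have e3 : c11 + c12 + c21 + c22 = n * mu s := by
    have e2' : c21 + c22 = T.card - a * mu s := by
      rw [hc21, hc22, ← Finset.filter_filter, ← Finset.filter_filter,
        Finset.card_filter_add_card_filter_not, eAn]
    have hle : a * mu s ≤ T.card := by
      rw [← eA]; exact Finset.card_filter_le _ _
    omega
  have hSsplit : ∑ p ∈ T, f p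
      = ((∑ p ∈ T.filter (fun p => p.1 ∈ A ∧ p.2 ∈ C), f p)
        + ∑ p ∈ T.filter (fun p => p.1 ∈ A ∧ ¬ p.2 ∈ C), f p)
      + ((∑ p ∈ T.filter (fun p => ¬ p.1 ∈ A ∧ p.2 ∈ C), f p)
        + ∑ p ∈ T.filter (fun p => ¬ p.1 ∈ A ∧ ¬ p.2 ∈ C), f p) := by
    rw [← Finset.filter_filter, ← Finset.filter_filter, ← Finset.filter_filter,
      ← Finset.filter_filter, Finset.sum_filter_add_sum_filter_not,
      Finset.sum_filter_add_sum_filter_not, Finset.sum_filter_add_sum_filter_not]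
  have claimA : ∑ p ∈ T, f p = (mu s : ℤ) * ∑ t, (lam1 t : ℤ) := by
    rw [hf, Finset.sum_comm, Finset.mul_sum]
    refine Finset.sum_congr rfl fun t _ => ?_
    have hnat : ∑ p ∈ T, F t p.1 p.2 = mu s * lam1 t := by
      have : ∑ p ∈ T, F t p.1 p.2 = (T.filter (fun p => F t p.1 p.2 = 1)).card := by
        rw [Finset.card_filter]
        refine Finset.sum_congr rfl fun p _ => ?_
        rcases (hF t).1 p.1 p.2 with h | h <;> simp [h]
      rw [this, hT, Finset.filter_filter]
      exact (hOrth t s).1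
    calc ∑ p ∈ T, (F t p.1 p.2 : ℤ)
        = ((∑ p ∈ T, F t p.1 p.2 : ℕ) : ℤ) := by push_cast; rfl
      _ = (mu s : ℤ) * (lam1 t : ℤ) := by rw [hnat]; push_cast; ring
  have const : ∀ (X : Finset (Fin n × Fin n)) (x : ℕ),
      (∀ p ∈ X, f p ≡ (x : ℤ) [ZMOD (w : ℤ)]) →
      ((∑ p ∈ X, f p : ℤ) : ZMod w) = (X.card : ZMod w) * (x : ZMod w) := by
    intro X x hX
    push_cast
    rw [Finset.sum_congr rfl (fun p hp =>
      (ZMod.intCast_eq_intCast_iff _ _ _).mpr (hX p hp)),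
      Finset.sum_const, nsmul_eq_mul]
    push_cast
    ring
  have v11 := const (T.filter (fun p => p.1 ∈ A ∧ p.2 ∈ C)) x1
    (fun p hp => by
      have h := (Finset.mem_filter.mp hp).2
      exact h11 p.1 h.1 p.2 h.2)
  have v12 := const (T.filter (fun p => p.1 ∈ A ∧ ¬ p.2 ∈ C)) x2
    (fun p hp => by
      have h := (Finset.mem_filter.mp hp).2
      exact h12 p.1 h.1 p.2 h.2)
  have v21 := const (T.filter (fun p => ¬ p.1 ∈ A ∧ p.2 ∈ C)) x3
    (fun p hp => by
      have h := (Finset.mem_filter.mp hp).2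
      exact h21 p.1 h.1 p.2 h.2)
  have v22 := const (T.filter (fun p => ¬ p.1 ∈ A ∧ ¬ p.2 ∈ C)) x4
    (fun p hp => by
      have h := (Finset.mem_filter.mp hp).2
      exact h22 p.1 h.1 p.2 h.2)
  rw [← ZMod.intCast_eq_intCast_iff]
  have lhs_eq : (((mu s : ℤ) * ∑ t, (lam1 t : ℤ) : ℤ) : ZMod w)
      = (c11 : ZMod w) * x1 + c12 * x2 + c21 * x3 + c22 * x4 := by
    rw [← claimA, hSsplit]
    push_cast [v11, v12, v21, v22]
    ring
  rw [lhs_eq]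
  have ex : ((x1 : ZMod w) + x4) = (x2 : ZMod w) + x3 := by
    have := (ZMod.intCast_eq_intCast_iff _ _ _).mpr hx
    push_cast at this
    exact this
  have e1' : (c11 : ZMod w) + c12 = (a : ZMod w) * mu s := by
    exact_mod_cast congrArg (Nat.cast : ℕ → ZMod w) e1
  have e2' : (c11 : ZMod w) + c21 = (b : ZMod w) * mu s := by
    exact_mod_cast congrArg (Nat.cast : ℕ → ZMod w) e2
  have e3' : (c11 : ZMod w) + c12 + c21 + c22 = (n : ZMod w) * mu s := by
    exact_mod_cast congrArg (Nat.cast : ℕ → ZMod w) e3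
  push_cast
  linear_combination (c11 : ZMod w) * ex + ((x2 : ZMod w) - x4) * e1'
    + ((x3 : ZMod w) - x4) * e2' + (x4 : ZMod w) * e3'
end

section
/- Let w be a positive integer and let {F_1,…,F_k} be a set of mutually orthogonal binary frequency squares, each of type (n;λ_0,λ_1). Suppose there are nonnegative integers x_1,x_2,x_3,x_4 with x_1 + x_4 ≡ x_2 + x_3 (mod w), a set A of rows with |A| = a and a set C of columns with |C| = b, such that the entry of the ℤ-sum of the F_t in cell (i,j) is congruent mod w to x_1 if i∈A and j∈C, to x_2 if i∈A and j∉C, to x_3 if i∉A and j∈C, and to x_4 if i∉A and j∉C. If λ_0 or λ_1 is coprime to w, and k·λ_1 ≢ a·(x_2−x_4) + b·(x_3−x_4) + n·x_4 (mod w), then no binary frequency square of type (n;λ_0,λ_1) is orthogonal to every F_t (i.e., the set {F_1,…,F_k} is type-maximal). -/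
open Finset

lemma sum01_eq_card {n lam1 : ℕ} {f : Fin n → ℕ}
    (h01 : ∀ j, f j = 0 ∨ f j = 1)
    (hc : ((univ : Finset (Fin n)).filter (fun j => f j = 1)).card = lam1) :
    ∑ j, f j = lam1 := by
  have h1 : ∑ j ∈ univ.filter (fun j => f j = 1), f j
      = (univ.filter (fun j => f j = 1)).card := by
    rw [Finset.card_eq_sum_ones]
    exact Finset.sum_congr rfl (fun j hj => (Finset.mem_filter.mp hj).2)
  have h2 : ∑ j ∈ univ.filter (fun j => ¬ f j = 1), f j = 0 := by
    apply Finset.sum_eq_zero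
    intro j hj
    rcases h01 j with h | h
    · exact h
    · exact absurd h (Finset.mem_filter.mp hj).2
  have h3 := Finset.sum_filter_add_sum_filter_not univ (fun j => f j = 1) f
  omega

lemma sumprod01_eq_card {n : ℕ} {F G : Fin n → Fin n → ℕ}
    (hF : ∀ i j, F i j = 0 ∨ F i j = 1) (hG : ∀ i j, G i j = 0 ∨ G i j = 1) :
    ∑ p : Fin n × Fin n, F p.1 p.2 * G p.1 p.2 =
      ((univ : Finset (Fin n × Fin n)).filter
        (fun p => F p.1 p.2 = 1 ∧ G p.1 p.2 = 1)).card := by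
  have h1 : ∑ p ∈ univ.filter (fun p : Fin n × Fin n => F p.1 p.2 = 1 ∧ G p.1 p.2 = 1),
      F p.1 p.2 * G p.1 p.2
      = (univ.filter (fun p : Fin n × Fin n => F p.1 p.2 = 1 ∧ G p.1 p.2 = 1)).card := by
    rw [Finset.card_eq_sum_ones]
    refine Finset.sum_congr rfl (fun p hp => ?_)
    obtain ⟨e1, e2⟩ := (Finset.mem_filter.mp hp).2
    rw [e1, e2]
  have h2 : ∑ p ∈ univ.filter (fun p : Fin n × Fin n => ¬ (F p.1 p.2 = 1 ∧ G p.1 p.2 = 1)),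
      F p.1 p.2 * G p.1 p.2 = 0 := by
    apply Finset.sum_eq_zero
    intro p hp
    have hnp := (Finset.mem_filter.mp hp).2
    rcases hF p.1 p.2 with h | h
    · rw [h, zero_mul]
    · rcases hG p.1 p.2 with h' | h'
      · rw [h', mul_zero]
      · exact absurd ⟨h, h'⟩ hnp
  have h3 := Finset.sum_filter_add_sum_filter_not univ
    (fun p : Fin n × Fin n => F p.1 p.2 = 1 ∧ G p.1 p.2 = 1)
    (fun p => F p.1 p.2 * G p.1 p.2)
  omega

/-- Corollary: under the block-structure hypothesis on the `ℤ`-sum, if `lam0` or `lam1`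
is coprime to `w` and `k·lam1 ≢ a(x2-x4) + b(x3-x4) + n·x4 (mod w)`, then no binary
frequency square of type `(n; lam0, lam1)` is orthogonal to every member of the set,
i.e. the set is type-maximal. -/
theorem stmt1 (w k n : ℕ) (hw : 0 < w)
    (lam0 lam1 : ℕ) (F : Fin k → Fin n → Fin n → ℕ)
    (hlam : lam0 + lam1 = n)
    (hF : ∀ t, IsBFS n lam1 (F t))
    (hMO : ∀ s t, s ≠ t → OrthBFS n lam1 lam1 (F s) (F t))
    (x1 x2 x3 x4 : ℕ)
    (hx : ((x1 : ℤ) + x4) ≡ ((x2 : ℤ) + x3) [ZMOD (w : ℤ)])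
    (A C : Finset (Fin n)) (a b : ℕ) (ha : A.card = a) (hb : C.card = b)
    (h11 : ∀ i ∈ A, ∀ j ∈ C, (∑ t, (F t i j : ℤ)) ≡ (x1 : ℤ) [ZMOD (w : ℤ)])
    (h12 : ∀ i ∈ A, ∀ j ∉ C, (∑ t, (F t i j : ℤ)) ≡ (x2 : ℤ) [ZMOD (w : ℤ)])
    (h21 : ∀ i ∉ A, ∀ j ∈ C, (∑ t, (F t i j : ℤ)) ≡ (x3 : ℤ) [ZMOD (w : ℤ)])
    (h22 : ∀ i ∉ A, ∀ j ∉ C, (∑ t, (F t i j : ℤ)) ≡ (x4 : ℤ) [ZMOD (w : ℤ)])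
    (hcop : Nat.Coprime lam0 w ∨ Nat.Coprime lam1 w)
    (hnc : ¬ (((k : ℤ) * lam1) ≡
      ((a : ℤ) * ((x2 : ℤ) - x4) + (b : ℤ) * ((x3 : ℤ) - x4) + (n : ℤ) * x4) [ZMOD (w : ℤ)])) :
    ¬ ∃ G : Fin n → Fin n → ℕ, IsBFS n lam1 G ∧ ∀ t, OrthBFS n lam1 lam1 (F t) G := by
  rintro ⟨G, hG, hOrth⟩
  classical
  -- natural number facts
  have rowG : ∀ i, ∑ j, G i j = lam1 := fun i => sum01_eq_card (fun j => hG.1 i j) (hG.2.1 i)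
  have colG : ∀ j, ∑ i, G i j = lam1 := fun j => sum01_eq_card (fun i => hG.1 i j) (hG.2.2 j)
  have rowF : ∀ t i, ∑ j, F t i j = lam1 :=
    fun t i => sum01_eq_card (fun j => (hF t).1 i j) ((hF t).2.1 i)
  have orthN : ∀ t, ∑ i, ∑ j, F t i j * G i j = lam1 * lam1 := by
    intro t
    have h := sumprod01_eq_card (hF t).1 hG.1
    have h2 := hOrth t
    unfold OrthBFS at h2
    rw [h2] at h
    rw [← h, Fintype.sum_prod_type]
  -- casts to ZMod w
  have rowG' : ∀ i, ∑ j, (G i j : ZMod w) = (lam1 : ZMod w) := by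
    intro i
    have h := congrArg (Nat.cast (R := ZMod w)) (rowG i); push_cast at h; exact h
  have colG' : ∀ j, ∑ i, (G i j : ZMod w) = (lam1 : ZMod w) := by
    intro j
    have h := congrArg (Nat.cast (R := ZMod w)) (colG j); push_cast at h; exact h
  have hcast : ∀ (i j : Fin n) (x : ℕ),
      ((∑ t, (F t i j : ℤ)) ≡ (x : ℤ) [ZMOD (w : ℤ)]) →
      (∑ t, (F t i j : ZMod w)) = (x : ZMod w) := by
    intro i j x h
    have h' := (ZMod.intCast_eq_intCast_iff _ _ _).mpr h
    push_cast at h'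
    exact h'
  have hx' : (x1 : ZMod w) + (x4 : ZMod w) = (x2 : ZMod w) + (x3 : ZMod w) := by
    have h' := (ZMod.intCast_eq_intCast_iff _ _ _).mpr hx
    push_cast at h'
    exact h'
  have hlam' : (lam0 : ZMod w) + (lam1 : ZMod w) = (n : ZMod w) := by
    have h := congrArg (Nat.cast (R := ZMod w)) hlam; push_cast at h; exact h
  set ca : ZMod w := (Aᶜ.card : ZMod w) with hca_def
  set cb : ZMod w := (Cᶜ.card : ZMod w) with hcb_def
  have h5 : (a : ZMod w) + ca = (n : ZMod w) := by
    have h : A.card + Aᶜ.card = n := by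
      rw [Finset.card_add_card_compl]; simp
    rw [ha] at h
    have h' := congrArg (Nat.cast (R := ZMod w)) h; push_cast at h'
    rw [hca_def]; push_cast; exact h'
  have h6 : (b : ZMod w) + cb = (n : ZMod w) := by
    have h : C.card + Cᶜ.card = n := by
      rw [Finset.card_add_card_compl]; simp
    rw [hb] at h
    have h' := congrArg (Nat.cast (R := ZMod w)) h; push_cast at h'
    rw [hcb_def]; push_cast; exact h'
  set α : ZMod w := ∑ i ∈ A, ∑ j ∈ C, (G i j : ZMod w) with hα
  set β : ZMod w := ∑ i ∈ A, ∑ j ∈ Cᶜ, (G i j : ZMod w) with hβ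
  set γ : ZMod w := ∑ i ∈ Aᶜ, ∑ j ∈ C, (G i j : ZMod w) with hγ
  set δ : ZMod w := ∑ i ∈ Aᶜ, ∑ j ∈ Cᶜ, (G i j : ZMod w) with hδ
  have innerG : ∀ i : Fin n, (∑ j ∈ C, (G i j : ZMod w)) + ∑ j ∈ Cᶜ, (G i j : ZMod w)
      = (lam1 : ZMod w) := fun i => (Finset.sum_add_sum_compl C _).trans (rowG' i)
  have hab : α + β = (a : ZMod w) * (lam1 : ZMod w) := by
    rw [hα, hβ, ← Finset.sum_add_distrib,
      Finset.sum_congr rfl (fun i _ => innerG i), Finset.sum_const, ha,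
      nsmul_eq_mul]
  have hgd : γ + δ = ca * (lam1 : ZMod w) := by
    rw [hγ, hδ, ← Finset.sum_add_distrib,
      Finset.sum_congr rfl (fun i _ => innerG i), Finset.sum_const, hca_def,
      nsmul_eq_mul]
  have hag : α + γ = (b : ZMod w) * (lam1 : ZMod w) := by
    rw [hα, hγ]
    rw [Finset.sum_add_sum_compl A (fun i => ∑ j ∈ C, (G i j : ZMod w))]
    rw [Finset.sum_comm]
    rw [Finset.sum_congr rfl (fun j (_ : j ∈ C) => colG' j), Finset.sum_const, hb,
      nsmul_eq_mul]
  -- the S1 computation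
  have per_t : ∀ t, ∑ i, ∑ j, (F t i j : ZMod w) * (G i j : ZMod w)
      = (lam1 : ZMod w) * (lam1 : ZMod w) := by
    intro t
    have h := congrArg (Nat.cast (R := ZMod w)) (orthN t); push_cast at h; exact h
  have hS1a : (∑ i, ∑ j, (∑ t, (F t i j : ZMod w)) * (G i j : ZMod w))
      = (k : ZMod w) * ((lam1 : ZMod w) * (lam1 : ZMod w)) := by
    calc (∑ i, ∑ j, (∑ t, (F t i j : ZMod w)) * (G i j : ZMod w))
        = ∑ i, ∑ j, ∑ t, (F t i j : ZMod w) * (G i j : ZMod w) := by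
          refine Finset.sum_congr rfl fun i _ => Finset.sum_congr rfl fun j _ => ?_
          rw [Finset.sum_mul]
      _ = ∑ i, ∑ t, ∑ j, (F t i j : ZMod w) * (G i j : ZMod w) :=
          Finset.sum_congr rfl fun i _ => Finset.sum_comm
      _ = ∑ t, ∑ i, ∑ j, (F t i j : ZMod w) * (G i j : ZMod w) := Finset.sum_comm
      _ = ∑ _t : Fin k, (lam1 : ZMod w) * (lam1 : ZMod w) :=
          Finset.sum_congr rfl fun t _ => per_t t
      _ = (k : ZMod w) * ((lam1 : ZMod w) * (lam1 : ZMod w)) := by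
          rw [Finset.sum_const, Finset.card_univ, Fintype.card_fin, nsmul_eq_mul]
  have hS1b : (∑ i, ∑ j, (∑ t, (F t i j : ZMod w)) * (G i j : ZMod w))
      = (x1 : ZMod w) * α + (x2 : ZMod w) * β + (x3 : ZMod w) * γ + (x4 : ZMod w) * δ := by
    have hA : ∀ i ∈ A, (∑ j, (∑ t, (F t i j : ZMod w)) * (G i j : ZMod w))
        = (x1 : ZMod w) * ∑ j ∈ C, (G i j : ZMod w)
          + (x2 : ZMod w) * ∑ j ∈ Cᶜ, (G i j : ZMod w) := by
      intro i hi
      rw [← Finset.sum_add_sum_compl C (fun j => (∑ t, (F t i j : ZMod w)) * (G i j : ZMod w)),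
        Finset.mul_sum, Finset.mul_sum]
      congr 1
      · exact Finset.sum_congr rfl fun j hj => by rw [hcast i j x1 (h11 i hi j hj)]
      · exact Finset.sum_congr rfl fun j hj => by
          rw [hcast i j x2 (h12 i hi j (Finset.mem_compl.mp hj))]
    have hA' : ∀ i ∈ Aᶜ, (∑ j, (∑ t, (F t i j : ZMod w)) * (G i j : ZMod w))
        = (x3 : ZMod w) * ∑ j ∈ C, (G i j : ZMod w)
          + (x4 : ZMod w) * ∑ j ∈ Cᶜ, (G i j : ZMod w) := by
      intro i hi
      have hi' := Finset.mem_compl.mp hi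
      rw [← Finset.sum_add_sum_compl C (fun j => (∑ t, (F t i j : ZMod w)) * (G i j : ZMod w)),
        Finset.mul_sum, Finset.mul_sum]
      congr 1
      · exact Finset.sum_congr rfl fun j hj => by rw [hcast i j x3 (h21 i hi' j hj)]
      · exact Finset.sum_congr rfl fun j hj => by
          rw [hcast i j x4 (h22 i hi' j (Finset.mem_compl.mp hj))]
    calc (∑ i, ∑ j, (∑ t, (F t i j : ZMod w)) * (G i j : ZMod w))
        = (∑ i ∈ A, ∑ j, (∑ t, (F t i j : ZMod w)) * (G i j : ZMod w))
          + ∑ i ∈ Aᶜ, ∑ j, (∑ t, (F t i j : ZMod w)) * (G i j : ZMod w) :=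
          (Finset.sum_add_sum_compl A _).symm
      _ = (∑ i ∈ A, ((x1 : ZMod w) * ∑ j ∈ C, (G i j : ZMod w)
            + (x2 : ZMod w) * ∑ j ∈ Cᶜ, (G i j : ZMod w)))
          + ∑ i ∈ Aᶜ, ((x3 : ZMod w) * ∑ j ∈ C, (G i j : ZMod w)
            + (x4 : ZMod w) * ∑ j ∈ Cᶜ, (G i j : ZMod w)) := by
          rw [Finset.sum_congr rfl hA, Finset.sum_congr rfl hA']
      _ = (x1 : ZMod w) * α + (x2 : ZMod w) * β + (x3 : ZMod w) * γ + (x4 : ZMod w) * δ := by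
          rw [Finset.sum_add_distrib, Finset.sum_add_distrib, ← Finset.mul_sum,
            ← Finset.mul_sum, ← Finset.mul_sum, ← Finset.mul_sum, hα, hβ, hγ, hδ]
          ring
  have E1 : (k : ZMod w) * ((lam1 : ZMod w) * (lam1 : ZMod w))
      = (x1 : ZMod w) * α + (x2 : ZMod w) * β + (x3 : ZMod w) * γ + (x4 : ZMod w) * δ :=
    hS1a.symm.trans hS1b
  -- the total-sum computation
  have hTa : (∑ i, ∑ j, ∑ t, (F t i j : ZMod w))
      = (k : ZMod w) * ((n : ZMod w) * (lam1 : ZMod w)) := by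
    calc (∑ i, ∑ j, ∑ t, (F t i j : ZMod w))
        = ∑ i, ∑ t, ∑ j, (F t i j : ZMod w) :=
          Finset.sum_congr rfl fun i _ => Finset.sum_comm
      _ = ∑ t, ∑ i, ∑ j, (F t i j : ZMod w) := Finset.sum_comm
      _ = ∑ _t : Fin k, (n : ZMod w) * (lam1 : ZMod w) := by
          refine Finset.sum_congr rfl fun t _ => ?_
          have h : ∑ i, ∑ j, F t i j = n * lam1 := by
            rw [Finset.sum_congr rfl (fun i _ => rowF t i), Finset.sum_const,
              Finset.card_univ, Fintype.card_fin, smul_eq_mul]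
          have h' := congrArg (Nat.cast (R := ZMod w)) h; push_cast at h'; exact h'
      _ = (k : ZMod w) * ((n : ZMod w) * (lam1 : ZMod w)) := by
          rw [Finset.sum_const, Finset.card_univ, Fintype.card_fin, nsmul_eq_mul]
  have hTb : (∑ i, ∑ j, ∑ t, (F t i j : ZMod w))
      = (a : ZMod w) * (b : ZMod w) * (x1 : ZMod w) + (a : ZMod w) * cb * (x2 : ZMod w)
        + ca * (b : ZMod w) * (x3 : ZMod w) + ca * cb * (x4 : ZMod w) := by
    have hA : ∀ i ∈ A, (∑ j, ∑ t, (F t i j : ZMod w))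
        = (b : ZMod w) * (x1 : ZMod w) + cb * (x2 : ZMod w) := by
      intro i hi
      rw [← Finset.sum_add_sum_compl C (fun j => ∑ t, (F t i j : ZMod w))]
      rw [Finset.sum_congr rfl (fun j hj => hcast i j x1 (h11 i hi j hj)),
        Finset.sum_congr rfl
          (fun j hj => hcast i j x2 (h12 i hi j (Finset.mem_compl.mp hj))),
        Finset.sum_const, Finset.sum_const, hb, hcb_def, nsmul_eq_mul, nsmul_eq_mul]
    have hA' : ∀ i ∈ Aᶜ, (∑ j, ∑ t, (F t i j : ZMod w))
        = (b : ZMod w) * (x3 : ZMod w) + cb * (x4 : ZMod w) := by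
      intro i hi
      have hi' := Finset.mem_compl.mp hi
      rw [← Finset.sum_add_sum_compl C (fun j => ∑ t, (F t i j : ZMod w))]
      rw [Finset.sum_congr rfl (fun j hj => hcast i j x3 (h21 i hi' j hj)),
        Finset.sum_congr rfl
          (fun j hj => hcast i j x4 (h22 i hi' j (Finset.mem_compl.mp hj))),
        Finset.sum_const, Finset.sum_const, hb, hcb_def, nsmul_eq_mul, nsmul_eq_mul]
    calc (∑ i, ∑ j, ∑ t, (F t i j : ZMod w))
        = (∑ i ∈ A, ∑ j, ∑ t, (F t i j : ZMod w))
          + ∑ i ∈ Aᶜ, ∑ j, ∑ t, (F t i j : ZMod w) := (Finset.sum_add_sum_compl A _).symm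
      _ = (∑ _i ∈ A, ((b : ZMod w) * (x1 : ZMod w) + cb * (x2 : ZMod w)))
          + ∑ _i ∈ Aᶜ, ((b : ZMod w) * (x3 : ZMod w) + cb * (x4 : ZMod w)) := by
          rw [Finset.sum_congr rfl hA, Finset.sum_congr rfl hA']
      _ = _ := by
          rw [Finset.sum_const, Finset.sum_const, ha, hca_def, nsmul_eq_mul, nsmul_eq_mul]
          ring
  have E2 : (k : ZMod w) * ((n : ZMod w) * (lam1 : ZMod w))
      = (a : ZMod w) * (b : ZMod w) * (x1 : ZMod w) + (a : ZMod w) * cb * (x2 : ZMod w)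
        + ca * (b : ZMod w) * (x3 : ZMod w) + ca * cb * (x4 : ZMod w) :=
    hTa.symm.trans hTb
  set R0 : ZMod w := (a : ZMod w) * ((x2 : ZMod w) - (x4 : ZMod w))
    + (b : ZMod w) * ((x3 : ZMod w) - (x4 : ZMod w)) + (n : ZMod w) * (x4 : ZMod w) with hR0
  have L1 : (lam1 : ZMod w) * ((k : ZMod w) * (lam1 : ZMod w)) = (lam1 : ZMod w) * R0 := by
    rw [hR0]
    linear_combination E1 + (x2 : ZMod w) * hab + ((x3 : ZMod w) - (x4 : ZMod w)) * hag
      + (x4 : ZMod w) * hgd + (x4 : ZMod w) * (lam1 : ZMod w) * h5 + α * hx'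
  have L2 : (n : ZMod w) * ((k : ZMod w) * (lam1 : ZMod w)) = (n : ZMod w) * R0 := by
    rw [hR0]
    linear_combination E2 + (a : ZMod w) * (b : ZMod w) * hx'
      + ((a : ZMod w) * (x2 : ZMod w) + ca * (x4 : ZMod w)) * h6
      + ((b : ZMod w) * (x3 : ZMod w) + ((n : ZMod w) - (b : ZMod w)) * (x4 : ZMod w)) * h5
  have final : (k : ZMod w) * (lam1 : ZMod w) = R0 := by
    rcases hcop with hc | hc
    · have hu : IsUnit ((lam0 : ℕ) : ZMod w) := (ZMod.isUnit_iff_coprime lam0 w).mpr hc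
      refine hu.mul_left_cancel ?_
      linear_combination L2 - L1 + ((k : ZMod w) * (lam1 : ZMod w) - R0) * hlam'
    · have hu : IsUnit ((lam1 : ℕ) : ZMod w) := (ZMod.isUnit_iff_coprime lam1 w).mpr hc
      exact hu.mul_left_cancel L1
  rw [← ZMod.intCast_eq_intCast_iff] at hnc
  push_cast at hnc
  exact hnc (by rw [final, hR0])
end

section
/- Let n be a positive integer and let d > 1 be a divisor of n, with λ = n/d. Let σ be the cyclic permutation (2 3 ⋯ d) of {1,…,d} (fixing 1), and for 1 ≤ m ≤ d−1 let F_m be the n×n (0,1)-matrix obtained from the permutation matrix of σ^m by replacing each entry by the λ×λ constant block with that entry (dilation by λ). Then {F_1,…,F_{d−1}} is a set of d−1 mutually orthogonal binary frequency squares of type (n;n−λ,λ), and its ℤ-sum is the block matrix with (d−1)·J_λ in the top-left λ×λ corner, the all-ones matrix J_{n−λ} in the bottom-right (n−λ)×(n−λ) corner, and zeros elsewhere. -/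
open Finset

/-- The image of `r ∈ {0, …, d-1}` under the `m`-th power of the cyclic permutation
`(1 2 ⋯ (d-1))` of `{0, …, d-1}` fixing `0` (in 1-based notation, the cycle
`(2 3 ⋯ d)` of `{1, …, d}` fixing `1`). -/
def cycPow (d m r : ℕ) : ℕ := if r = 0 then 0 else 1 + ((r - 1 + m) % (d - 1))

/-- The `n × n` matrix obtained from the permutation matrix of the `m`-th power of the
cycle `(2 3 ⋯ d)` by dilation: every entry is replaced by the `lam × lam` constant
block with that entry (here `n = d * lam`). -/
def dilCyc (n d lam m : ℕ) (i j : Fin n) : ℕ :=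
  if (j : ℕ) / lam = cycPow d m ((i : ℕ) / lam) then 1 else 0

/- Auxiliary lemmas -/

lemma ite_one_zero_eq_one (P : Prop) [Decidable P] : (if P then (1 : ℕ) else 0) = 1 ↔ P := by
  split <;> simp [*]

lemma card_fin_filter (n : ℕ) (p : ℕ → Prop) [DecidablePred p] :
    (univ.filter fun i : Fin n => p i).card = ((range n).filter p).card := by
  rw [Finset.card_filter, Finset.card_filter]
  exact Fin.sum_univ_eq_sum_range (fun i => if p i then 1 else 0) n

lemma filter_div_block (d lam c : ℕ) (hl : 0 < lam) (hc : c < d) :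
    ((range (d * lam)).filter fun j => j / lam = c) = Finset.Ico (c * lam) (c * lam + lam) := by
  ext x
  simp only [mem_filter, mem_range, mem_Ico]
  constructor
  · rintro ⟨hx, rfl⟩
    have h1 := Nat.div_mul_le_self x lam
    have h2 := Nat.mod_lt x hl
    have h3 : x / lam * lam + x % lam = x := Nat.div_add_mod' x lam
    omega
  · rintro ⟨h1, h2⟩
    have he : (c + 1) * lam = c * lam + lam := by ring
    have hd2 : (c + 1) * lam ≤ d * lam := Nat.mul_le_mul_right lam hc
    exact ⟨by omega, Nat.div_eq_of_lt_le h1 (by omega)⟩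

lemma card_block (n d lam c : ℕ) (hn : n = d * lam) (hl : 0 < lam) (hc : c < d) :
    (univ.filter fun j : Fin n => (j : ℕ) / lam = c).card = lam := by
  subst hn
  rw [card_fin_filter (d * lam) (fun x => x / lam = c),
    filter_div_block d lam c hl hc, Nat.card_Ico]
  omega

lemma div0 (lam x : ℕ) (hl : 0 < lam) : x / lam = 0 ↔ x < lam := by
  constructor
  · intro h
    have h3 : x / lam * lam + x % lam = x := Nat.div_add_mod' x lam
    rw [h, Nat.zero_mul, Nat.zero_add] at h3
    have := Nat.mod_lt x hl
    omega
  · exact Nat.div_eq_of_lt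

lemma div_lt_d (n d lam : ℕ) (hn : n = d * lam) (hl : 0 < lam) (i : Fin n) :
    (i : ℕ) / lam < d := by
  have hi : (i : ℕ) < d * lam := hn ▸ i.isLt
  exact (Nat.div_lt_iff_lt_mul hl).mpr hi

lemma cycPow_zero' (d m : ℕ) : cycPow d m 0 = 0 := by simp [cycPow]

lemma cycPow_pos_def (d m r : ℕ) (hr : r ≠ 0) :
    cycPow d m r = 1 + ((r - 1 + m) % (d - 1)) := by simp [cycPow, hr]

lemma cycPow_lt (d m r : ℕ) (hd : 1 < d) : cycPow d m r < d := by
  unfold cycPow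
  split
  · omega
  · have := Nat.mod_lt (r - 1 + m) (show 0 < d - 1 by omega)
    omega

lemma cycPow_ne_zero (d m r : ℕ) (hr : r ≠ 0) : cycPow d m r ≠ 0 := by
  rw [cycPow_pos_def d m r hr]
  omega

lemma mod_shift_aux (k a b m : ℕ) (ha : a < k) (hm : m ≤ k) (h : (a + m) % k = b) :
    (b + (k - m)) % k = a := by
  calc (b + (k - m)) % k = ((a + m) % k + (k - m)) % k := by rw [h]
    _ = (a + m + (k - m)) % k := Nat.mod_add_mod _ _ _
    _ = (a + k) % k := by congr 1; omega
    _ = a % k := Nat.add_mod_right a k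
    _ = a := Nat.mod_eq_of_lt ha

lemma mod_shift (k a b m : ℕ) (ha : a < k) (hb : b < k) (hm : m ≤ k) :
    (a + m) % k = b ↔ (b + (k - m)) % k = a := by
  constructor
  · exact mod_shift_aux k a b m ha hm
  · intro h
    have h2 := mod_shift_aux k b a (k - m) hb (Nat.sub_le k m) h
    rwa [Nat.sub_sub_self hm] at h2

lemma cycPow_eq_iff (d m r c : ℕ) (hd : 1 < d) (hm : 1 ≤ m) (hm2 : m ≤ d - 1)
    (hr : r < d) (hc : c < d) :
    cycPow d m r = c ↔ r = cycPow d (d - 1 - m) c := by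
  rcases eq_or_ne r 0 with rfl | hr0
  · rw [cycPow_zero']
    rcases eq_or_ne c 0 with rfl | hc0
    · rw [cycPow_zero']
    · rw [cycPow_pos_def d _ c hc0]
      omega
  · rw [cycPow_pos_def d m r hr0]
    rcases eq_or_ne c 0 with rfl | hc0
    · rw [cycPow_zero']
      omega
    · rw [cycPow_pos_def d _ c hc0]
      have key := mod_shift (d - 1) (r - 1) (c - 1) m (by omega) (by omega) (by omega)
      constructor
      · intro h
        have h1 : (r - 1 + m) % (d - 1) = c - 1 := by omega
        have h2 := key.mp h1
        omega
      · intro h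
        have h2 : (c - 1 + (d - 1 - m)) % (d - 1) = r - 1 := by omega
        have h1 := key.mpr h2
        omega

lemma cycPow_eq_m_iff (d m r c : ℕ) (hd : 1 < d) (hm : 1 ≤ m) (hm2 : m ≤ d - 1)
    (hr1 : 1 ≤ r) (hr : r < d) (hc1 : 1 ≤ c) (hc : c < d) :
    cycPow d m r = c ↔ m = 1 + ((c - 1 + (d - 1 - r)) % (d - 1)) := by
  rw [cycPow_pos_def d m r (by omega)]
  have key := mod_shift (d - 1) (m - 1) (c - 1) r (by omega) (by omega) (by omega)
  have hre : r - 1 + m = m - 1 + r := by omega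
  rw [hre]
  constructor
  · intro h
    have h2 := key.mp (by omega)
    omega
  · intro h
    have h2 := key.mpr (by omega)
    omega

/-- The dilated powers of the cycle `(2 3 ⋯ d)` form a set of `d-1` mutually orthogonal
binary frequency squares of type `(n; n - lam, lam)`, and their `ℤ`-sum has the block form
with `(d-1)·J_lam` in the top-left `lam × lam` corner, `J_{n-lam}` in the bottom-right
`(n-lam) × (n-lam)` corner, and zeros elsewhere. -/
theorem stmt2 (n d lam : ℕ) (hn : 0 < n) (hd : 1 < d) (hdvd : d ∣ n)
    (hlam : lam = n / d) :
    (∀ m, 1 ≤ m → m ≤ d - 1 → IsBFS n lam (dilCyc n d lam m)) ∧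
    (∀ m m', 1 ≤ m → m ≤ d - 1 → 1 ≤ m' → m' ≤ d - 1 → m ≠ m' →
      OrthBFS n lam lam (dilCyc n d lam m) (dilCyc n d lam m')) ∧
    (∀ i j : Fin n,
      (∑ m ∈ Finset.Icc 1 (d - 1), dilCyc n d lam m i j) =
        if (i : ℕ) < lam ∧ (j : ℕ) < lam then d - 1
        else if lam ≤ (i : ℕ) ∧ lam ≤ (j : ℕ) then 1 else 0) := by
  have hnd : n = d * lam := by
    rw [hlam, Nat.mul_div_cancel' hdvd]
  have hl : 0 < lam := by
    rcases Nat.eq_zero_or_pos lam with h0 | h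
    · rw [h0, Nat.mul_zero] at hnd; omega
    · exact h
  refine ⟨?_, ?_, ?_⟩
  · -- IsBFS
    intro m hm hm2
    refine ⟨fun i j => ?_, fun i => ?_, fun j => ?_⟩
    · unfold dilCyc; split <;> simp
    · -- row count
      have hc : cycPow d m ((i : ℕ) / lam) < d := cycPow_lt d m _ hd
      have heq : (univ.filter fun j : Fin n => dilCyc n d lam m i j = 1) =
          (univ.filter fun j : Fin n => (j : ℕ) / lam = cycPow d m ((i : ℕ) / lam)) := by
        apply filter_congr
        intro j _
        simp only [dilCyc, ite_one_zero_eq_one]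
      rw [heq]
      exact card_block n d lam _ hnd hl hc
    · -- column count
      have hcd : (j : ℕ) / lam < d := div_lt_d n d lam hnd hl j
      have hs : cycPow d (d - 1 - m) ((j : ℕ) / lam) < d := cycPow_lt d _ _ hd
      have heq : (univ.filter fun i : Fin n => dilCyc n d lam m i j = 1) =
          (univ.filter fun i : Fin n =>
            (i : ℕ) / lam = cycPow d (d - 1 - m) ((j : ℕ) / lam)) := by
        apply filter_congr
        intro i _
        have hrd : (i : ℕ) / lam < d := div_lt_d n d lam hnd hl i
        have key := cycPow_eq_iff d m ((i : ℕ) / lam) ((j : ℕ) / lam) hd hm hm2 hrd hcd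
        simp only [dilCyc, ite_one_zero_eq_one]
        exact ⟨fun h => key.mp h.symm, fun h => (key.mpr h).symm⟩
      rw [heq]
      exact card_block n d lam _ hnd hl hs
  · -- orthogonality
    intro m m' hm hm2 hm' hm'2 hne
    unfold OrthBFS
    have heq : ((univ : Finset (Fin n × Fin n)).filter
          (fun p => dilCyc n d lam m p.1 p.2 = 1 ∧ dilCyc n d lam m' p.1 p.2 = 1)) =
        ((univ : Finset (Fin n)).filter fun i : Fin n => (i : ℕ) / lam = 0) ×ˢ
        ((univ : Finset (Fin n)).filter fun j : Fin n => (j : ℕ) / lam = 0) := by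
      rw [← Finset.filter_product]
      rw [Finset.univ_product_univ]
      apply filter_congr
      intro p _
      simp only [dilCyc, ite_one_zero_eq_one]
      constructor
      · rintro ⟨e1, e2⟩
        have hr0 : (p.1 : ℕ) / lam = 0 := by
          by_contra hr0
          have hrd : (p.1 : ℕ) / lam < d := div_lt_d n d lam hnd hl p.1
          have hcd : (p.2 : ℕ) / lam < d := div_lt_d n d lam hnd hl p.2
          have hc1 : 1 ≤ (p.2 : ℕ) / lam := by
            have := cycPow_ne_zero d m ((p.1 : ℕ) / lam) hr0
            omega
          have k1 := (cycPow_eq_m_iff d m ((p.1 : ℕ) / lam) ((p.2 : ℕ) / lam) hd hm hm2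
            (Nat.pos_of_ne_zero hr0) hrd hc1 hcd).mp e1.symm
          have k2 := (cycPow_eq_m_iff d m' ((p.1 : ℕ) / lam) ((p.2 : ℕ) / lam) hd hm' hm'2
            (Nat.pos_of_ne_zero hr0) hrd hc1 hcd).mp e2.symm
          omega
        refine ⟨hr0, ?_⟩
        rw [e1, hr0, cycPow_zero']
      · rintro ⟨hr0, hc0⟩
        rw [hr0, hc0, cycPow_zero', cycPow_zero']
        exact ⟨rfl, rfl⟩
    rw [heq, Finset.card_product, card_block n d lam 0 hnd hl (by omega)]
  · -- sum
    intro i j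
    have hrd : (i : ℕ) / lam < d := div_lt_d n d lam hnd hl i
    have hcd : (j : ℕ) / lam < d := div_lt_d n d lam hnd hl j
    have hi : ((i : ℕ) / lam = 0) ↔ (i : ℕ) < lam := div0 lam _ hl
    have hj : ((j : ℕ) / lam = 0) ↔ (j : ℕ) < lam := div0 lam _ hl
    have hsum : ∀ m, dilCyc n d lam m i j =
        if (j : ℕ) / lam = cycPow d m ((i : ℕ) / lam) then 1 else 0 := fun m => rfl
    simp only [hsum]
    by_cases hr0 : (i : ℕ) / lam = 0
    · by_cases hc0 : (j : ℕ) / lam = 0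
      · have e1 : (∑ m ∈ Finset.Icc 1 (d - 1),
            if (j : ℕ) / lam = cycPow d m ((i : ℕ) / lam) then (1 : ℕ) else 0) =
            ∑ _m ∈ Finset.Icc 1 (d - 1), (1 : ℕ) :=
          Finset.sum_congr rfl (fun m _ => by rw [hr0, hc0, cycPow_zero', if_pos rfl])
        rw [e1, Finset.sum_const, smul_eq_mul, mul_one, Nat.card_Icc,
          if_pos ⟨hi.mp hr0, hj.mp hc0⟩]
        omega
      · have hj' : lam ≤ (j : ℕ) := by
          by_contra h
          exact hc0 (hj.mpr (by omega))
        have hi' : (i : ℕ) < lam := hi.mp hr0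
        rw [Finset.sum_congr rfl
          (fun m _ => if_neg (by rw [hr0, cycPow_zero']; omega)),
          Finset.sum_const_zero,
          if_neg (show ¬((i : ℕ) < lam ∧ (j : ℕ) < lam) by omega),
          if_neg (show ¬(lam ≤ (i : ℕ) ∧ lam ≤ (j : ℕ)) by omega)]
    · have hi' : lam ≤ (i : ℕ) := by
        by_contra h
        exact hr0 (hi.mpr (by omega))
      by_cases hc0 : (j : ℕ) / lam = 0
      · have hj' : (j : ℕ) < lam := hj.mp hc0
        rw [Finset.sum_congr rfl (fun m _ => if_neg (by
            have := cycPow_ne_zero d m ((i : ℕ) / lam) hr0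
            omega)),
          Finset.sum_const_zero,
          if_neg (show ¬((i : ℕ) < lam ∧ (j : ℕ) < lam) by omega),
          if_neg (show ¬(lam ≤ (i : ℕ) ∧ lam ≤ (j : ℕ)) by omega)]
      · have hj' : lam ≤ (j : ℕ) := by
          by_contra h
          exact hc0 (hj.mpr (by omega))
        have key : ∀ m ∈ Finset.Icc 1 (d - 1),
            (if (j : ℕ) / lam = cycPow d m ((i : ℕ) / lam) then (1 : ℕ) else 0) =
            (if m = 1 + (((j : ℕ) / lam - 1 + (d - 1 - (i : ℕ) / lam)) % (d - 1))
              then 1 else 0) := by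
          intro m hmm
          rw [Finset.mem_Icc] at hmm
          have hiff := cycPow_eq_m_iff d m ((i : ℕ) / lam) ((j : ℕ) / lam) hd hmm.1 hmm.2
            (Nat.pos_of_ne_zero hr0) hrd (Nat.pos_of_ne_zero hc0) hcd
          by_cases h : (j : ℕ) / lam = cycPow d m ((i : ℕ) / lam)
          · rw [if_pos h, if_pos (hiff.mp h.symm)]
          · rw [if_neg h, if_neg (fun hh => h (hiff.mpr hh).symm)]
        have hmem : 1 + (((j : ℕ) / lam - 1 + (d - 1 - (i : ℕ) / lam)) % (d - 1)) ∈
            Finset.Icc 1 (d - 1) := by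
          rw [Finset.mem_Icc]
          have := Nat.mod_lt ((j : ℕ) / lam - 1 + (d - 1 - (i : ℕ) / lam))
            (show 0 < d - 1 by omega)
          omega
        rw [Finset.sum_congr rfl key,
          Finset.sum_ite_eq' _ _ (fun _ => (1 : ℕ)), if_pos hmem,
          if_neg (show ¬((i : ℕ) < lam ∧ (j : ℕ) < lam) by omega),
          if_pos ⟨hi', hj'⟩]
end

section
/- Let n be a positive integer, let d > 1 be a divisor of n, and let λ = n/d. Let σ be the cyclic permutation (2 3 ⋯ d) of {1,…,d} (fixing 1), and for 1 ≤ m ≤ d−1 let F_m be the n×n (0,1)-matrix obtained from the permutation matrix of σ^m by replacing each entry by the λ×λ constant block with that entry. If some prime divisor of d does not divide λ, then the set {F_1,…,F_{d−1}} is type-maximal; that is, no binary frequency square of type (n;n−λ,λ) is orthogonal to every F_m. -/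
open Finset

lemma rot1 (k : ℕ) (g : ℕ → ℕ) :
    ∑ t ∈ Finset.range k, g ((1 + t) % k) = ∑ t ∈ Finset.range k, g t := by
  cases k with
  | zero => simp
  | succ k' =>
    rw [Finset.sum_range_succ, Finset.sum_range_succ']
    have h1 : (1 + k') % (k' + 1) = 0 := by rw [Nat.add_comm 1 k', Nat.mod_self]
    rw [h1]
    congr 1
    refine Finset.sum_congr rfl fun t ht => ?_
    rw [Finset.mem_range] at ht
    rw [Nat.mod_eq_of_lt (by omega), Nat.add_comm]

lemma rot (k c : ℕ) (g : ℕ → ℕ) :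
    ∑ t ∈ Finset.range k, g ((c + t) % k) = ∑ t ∈ Finset.range k, g (t % k) := by
  induction c with
  | zero => simp
  | succ c ih =>
    have h : ∀ t, (c + 1 + t) % k = (c + (1 + t) % k) % k := by
      intro t
      rw [Nat.add_mod_mod]
      congr 1
      omega
    calc ∑ t ∈ Finset.range k, g ((c + 1 + t) % k)
        = ∑ t ∈ Finset.range k, (fun x => g ((c + x) % k)) ((1 + t) % k) :=
          Finset.sum_congr rfl fun t _ => by rw [h t]
      _ = ∑ t ∈ Finset.range k, (fun x => g ((c + x) % k)) t := rot1 k (fun x => g ((c + x) % k))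
      _ = ∑ t ∈ Finset.range k, g ((c + t) % k) := rfl
      _ = ∑ t ∈ Finset.range k, g (t % k) := ih

def Bset (n lam r : ℕ) : Finset (Fin n) := univ.filter (fun i => (i : ℕ) / lam = r)

lemma mem_range_div (n d lam : ℕ) (hlam : 0 < lam) (hn : n = d * lam) (i : Fin n) :
    (i : ℕ) / lam ∈ Finset.range d := by
  rw [Finset.mem_range, Nat.div_lt_iff_lt_mul hlam]
  have := i.isLt
  omega

lemma Bset_card (n d lam : ℕ) (hlam : 0 < lam) (hn : n = d * lam) {r : ℕ} (hr : r < d) :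
    (Bset n lam r).card = lam := by
  rw [Bset, Finset.card_filter,
    Fin.sum_univ_eq_sum_range (fun i => if i / lam = r then 1 else 0) n,
    ← Finset.card_filter]
  have : (Finset.range n).filter (fun i => i / lam = r) =
      Finset.Ico (r * lam) (r * lam + lam) := by
    ext x
    simp only [Finset.mem_filter, Finset.mem_range, Finset.mem_Ico]
    constructor
    · rintro ⟨hx, rfl⟩
      refine ⟨Nat.div_mul_le_self x lam, ?_⟩
      have h1 := Nat.div_add_mod x lam
      have h2 := Nat.mod_lt x hlam
      have h3 : lam * (x / lam) = x / lam * lam := Nat.mul_comm _ _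
      omega
    · rintro ⟨h1, h2⟩
      have hsplit : r * lam + lam = (r + 1) * lam := by ring
      have hx : x < n := by
        have h4 : (r + 1) * lam ≤ d * lam := Nat.mul_le_mul_right lam (by omega)
        omega
      refine ⟨hx, Nat.div_eq_of_lt_le h1 (by omega)⟩
  rw [this, Nat.card_Ico]
  omega

lemma sum_blocks_row (n d lam : ℕ) (hlam : 0 < lam) (hn : n = d * lam)
    (g : Fin n → Fin n → ℕ) (hrow : ∀ i, ∑ j, g i j = lam) {r : ℕ} (hr : r < d) :
    ∑ s ∈ Finset.range d, ∑ i ∈ Bset n lam r, ∑ j ∈ Bset n lam s, g i j = lam * lam := by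
  rw [Finset.sum_comm]
  have key : ∀ i ∈ Bset n lam r,
      (∑ s ∈ Finset.range d, ∑ j ∈ Bset n lam s, g i j) = lam := by
    intro i _
    simp only [Bset]
    rw [Finset.sum_fiberwise_of_maps_to (fun j _ => mem_range_div n d lam hlam hn j)]
    exact hrow i
  rw [Finset.sum_congr rfl key, Finset.sum_const, Bset_card n d lam hlam hn hr, smul_eq_mul]

lemma sum_blocks_col (n d lam : ℕ) (hlam : 0 < lam) (hn : n = d * lam)
    (g : Fin n → Fin n → ℕ) (hcol : ∀ j, ∑ i, g i j = lam) {s : ℕ} (hs : s < d) :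
    ∑ r ∈ Finset.range d, ∑ i ∈ Bset n lam r, ∑ j ∈ Bset n lam s, g i j = lam * lam := by
  simp only [Bset]
  rw [Finset.sum_fiberwise_of_maps_to (fun i _ => mem_range_div n d lam hlam hn i)]
  rw [Finset.sum_comm]
  have key : ∀ j ∈ Finset.univ.filter (fun j : Fin n => (j : ℕ) / lam = s),
      (∑ i, g i j) = lam := fun j _ => hcol j
  rw [Finset.sum_congr rfl key, Finset.sum_const]
  have hc := Bset_card n d lam hlam hn hs
  simp only [Bset] at hc
  rw [hc, smul_eq_mul]

lemma cyc_sum (d : ℕ) (hd : 1 < d) (f : ℕ → ℕ) {r : ℕ} (hr1 : 1 ≤ r) (hrd : r < d) :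
    ∑ m ∈ Finset.Ico 1 d, f (cycPow d m r) = ∑ s ∈ Finset.Ico 1 d, f s := by
  rw [Finset.sum_Ico_eq_sum_range, Finset.sum_Ico_eq_sum_range]
  have h1 : ∀ t, cycPow d (1 + t) r = 1 + ((r + t) % (d - 1)) := by
    intro t
    rw [cycPow, if_neg (by omega)]
    congr 2
    omega
  calc ∑ t ∈ Finset.range (d - 1), f (cycPow d (1 + t) r)
      = ∑ t ∈ Finset.range (d - 1), (fun x => f (1 + x)) ((r + t) % (d - 1)) :=
        Finset.sum_congr rfl fun t _ => by rw [h1 t]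
    _ = ∑ t ∈ Finset.range (d - 1), (fun x => f (1 + x)) (t % (d - 1)) :=
        rot (d - 1) r (fun x => f (1 + x))
    _ = ∑ t ∈ Finset.range (d - 1), f (1 + t) := by
        refine Finset.sum_congr rfl fun t ht => ?_
        rw [Finset.mem_range] at ht
        rw [Nat.mod_eq_of_lt ht]


lemma orth_count (n d lam : ℕ) (hlam : 0 < lam) (hn : n = d * lam)
    (G : Fin n → Fin n → ℕ) (m : ℕ)
    (h : OrthBFS n lam lam (dilCyc n d lam m) G) :
    ∑ r ∈ Finset.range d, ∑ i ∈ Bset n lam r, ∑ j ∈ Bset n lam (cycPow d m r),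
      (if G i j = 1 then (1:ℕ) else 0) = lam * lam := by
  rw [OrthBFS, Finset.card_filter, Fintype.sum_prod_type] at h
  rw [← h]
  have hstep1 : ∀ (i : Fin n) (c : ℕ),
      ∑ j ∈ Bset n lam c, (if G i j = 1 then (1:ℕ) else 0)
        = ∑ j : Fin n, (if ((j : ℕ) / lam = c ∧ G i j = 1) then (1:ℕ) else 0) := by
    intro i c
    rw [Bset, Finset.sum_filter]
    exact Finset.sum_congr rfl fun j _ => by rw [ite_and]
  have hstep2 : ∀ (i j : Fin n),
      (if (dilCyc n d lam m i j = 1 ∧ G i j = 1) then (1:ℕ) else 0)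
        = (if ((j : ℕ) / lam = cycPow d m ((i : ℕ) / lam) ∧ G i j = 1)
            then (1:ℕ) else 0) := by
    intro i j
    have hiff : dilCyc n d lam m i j = 1 ↔
        (j : ℕ) / lam = cycPow d m ((i : ℕ) / lam) := by
      rw [dilCyc]; split <;> simp_all
    simp only [hiff]
  calc ∑ r ∈ Finset.range d, ∑ i ∈ Bset n lam r, ∑ j ∈ Bset n lam (cycPow d m r),
        (if G i j = 1 then (1:ℕ) else 0)
      = ∑ r ∈ Finset.range d, ∑ i ∈ Finset.univ.filter (fun i : Fin n => (i : ℕ) / lam = r),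
          (∑ j ∈ Bset n lam (cycPow d m ((i : ℕ) / lam)), if G i j = 1 then (1:ℕ) else 0) := by
        refine Finset.sum_congr rfl fun r _ => ?_
        rw [Bset]
        refine Finset.sum_congr rfl fun i hi => ?_
        rw [Finset.mem_filter] at hi
        rw [hi.2]
    _ = ∑ i : Fin n, ∑ j ∈ Bset n lam (cycPow d m ((i : ℕ) / lam)),
          (if G i j = 1 then (1:ℕ) else 0) :=
        Finset.sum_fiberwise_of_maps_to (fun i _ => mem_range_div n d lam hlam hn i) _
    _ = ∑ i : Fin n, ∑ j : Fin n,
          (if (dilCyc n d lam m i j = 1 ∧ G i j = 1) then (1:ℕ) else 0) := by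
        refine Finset.sum_congr rfl fun i _ => ?_
        rw [hstep1 i (cycPow d m ((i : ℕ) / lam))]
        exact Finset.sum_congr rfl fun j _ => (hstep2 i j).symm


/-- If some prime divisor of `d` does not divide `lam = n / d`, then the set of dilated
powers of the cycle `(2 3 ⋯ d)` is type-maximal: no binary frequency square of type
`(n; n - lam, lam)` is orthogonal to every member of the set. -/
theorem stmt3 (n d lam : ℕ) (hn : 0 < n) (hd : 1 < d) (hdvd : d ∣ n)
    (hlam : lam = n / d)
    (hp : ∃ p : ℕ, p.Prime ∧ p ∣ d ∧ ¬ p ∣ lam) :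
    ¬ ∃ G : Fin n → Fin n → ℕ, IsBFS n lam G ∧
      ∀ m, 1 ≤ m → m ≤ d - 1 → OrthBFS n lam lam (dilCyc n d lam m) G := by
  rintro ⟨G, ⟨hG01, hGrow, hGcol⟩, horth⟩
  obtain ⟨p, hpp, hpd, hpl⟩ := hp
  have hd0 : 0 < d := by omega
  have hlam0 : 0 < lam := by
    rw [hlam]
    exact Nat.div_pos (Nat.le_of_dvd hn hdvd) hd0
  have hn' : n = d * lam := by rw [hlam, Nat.mul_div_cancel' hdvd]
  set g : Fin n → Fin n → ℕ := fun i j => if G i j = 1 then 1 else 0 with hg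
  have hrow : ∀ i, ∑ j, g i j = lam := by
    intro i; rw [← hGrow i, Finset.card_filter]
  have hcol : ∀ j, ∑ i, g i j = lam := by
    intro j; rw [← hGcol j, Finset.card_filter]
  set N : ℕ → ℕ → ℕ := fun r s => ∑ i ∈ Bset n lam r, ∑ j ∈ Bset n lam s, g i j with hN
  have horthN : ∀ m ∈ Finset.Ico 1 d,
      ∑ r ∈ Finset.range d, N r (cycPow d m r) = lam * lam := by
    intro m hm
    rw [Finset.mem_Ico] at hm
    exact orth_count n d lam hlam0 hn' G m (horth m hm.1 (by omega))
  have hrowN : ∀ r < d, ∑ s ∈ Finset.range d, N r s = lam * lam := fun r hr =>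
    sum_blocks_row n d lam hlam0 hn' g hrow hr
  have hcolN0 : ∑ r ∈ Finset.range d, N r 0 = lam * lam :=
    sum_blocks_col n d lam hlam0 hn' g hcol hd0
  have hsplit : ∀ f : ℕ → ℕ,
      ∑ r ∈ Finset.range d, f r = f 0 + ∑ r ∈ Finset.Ico 1 d, f r := by
    intro f
    rw [Finset.range_eq_Ico, Finset.sum_eq_sum_Ico_succ_bot hd0]
  have hcyc0 : ∀ m, cycPow d m 0 = 0 := fun m => by rw [cycPow]; simp
  have e1 : ∑ m ∈ Finset.Ico 1 d, ∑ r ∈ Finset.range d, N r (cycPow d m r)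
      = (d - 1) * (lam * lam) := by
    rw [Finset.sum_congr rfl horthN, Finset.sum_const, Nat.card_Ico, smul_eq_mul]
  have e2 : ∑ m ∈ Finset.Ico 1 d, ∑ r ∈ Finset.range d, N r (cycPow d m r)
      = (d - 1) * N 0 0 + ∑ r ∈ Finset.Ico 1 d, ∑ s ∈ Finset.Ico 1 d, N r s := by
    rw [Finset.sum_comm, hsplit (fun r => ∑ m ∈ Finset.Ico 1 d, N r (cycPow d m r))]
    congr 1
    · have h0 : ∀ m ∈ Finset.Ico 1 d, N 0 (cycPow d m 0) = N 0 0 := fun m _ => by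
        rw [hcyc0]
      rw [Finset.sum_congr rfl h0, Finset.sum_const, Nat.card_Ico, smul_eq_mul]
    · refine Finset.sum_congr rfl fun r hr => ?_
      rw [Finset.mem_Ico] at hr
      exact cyc_sum d hd (fun s => N r s) hr.1 hr.2
  have e3 : (∑ r ∈ Finset.Ico 1 d, N r 0)
        + ∑ r ∈ Finset.Ico 1 d, ∑ s ∈ Finset.Ico 1 d, N r s
      = (d - 1) * (lam * lam) := by
    rw [← Finset.sum_add_distrib]
    have hterm : ∀ r ∈ Finset.Ico 1 d,
        N r 0 + ∑ s ∈ Finset.Ico 1 d, N r s = lam * lam := by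
      intro r hr
      rw [Finset.mem_Ico] at hr
      rw [← hsplit (fun s => N r s)]
      exact hrowN r hr.2
    rw [Finset.sum_congr rfl hterm, Finset.sum_const, Nat.card_Ico, smul_eq_mul]
  have e4 : N 0 0 + ∑ r ∈ Finset.Ico 1 d, N r 0 = lam * lam := by
    rw [← hsplit (fun r => N r 0)]; exact hcolN0
  have e5 : (d - 1) * N 0 0 = ∑ r ∈ Finset.Ico 1 d, N r 0 := by
    have h9 : (d - 1) * N 0 0 + ∑ r ∈ Finset.Ico 1 d, ∑ s ∈ Finset.Ico 1 d, N r s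
        = (∑ r ∈ Finset.Ico 1 d, N r 0)
          + ∑ r ∈ Finset.Ico 1 d, ∑ s ∈ Finset.Ico 1 d, N r s :=
      (e2.symm.trans e1).trans e3.symm
    exact Nat.add_right_cancel h9
  have e6 : d * N 0 0 = lam * lam := by
    have h8 : d * N 0 0 = N 0 0 + (d - 1) * N 0 0 := by
      have hd1 : d = 1 + (d - 1) := by omega
      conv_lhs => rw [hd1, Nat.add_mul, Nat.one_mul]
    rw [h8, e5]
    exact e4
  have hpll : p ∣ lam * lam := hpd.trans ⟨N 0 0, e6.symm⟩
  rcases (Nat.Prime.dvd_mul hpp).mp hpll with h | h <;> exact hpl h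
end

section
/- Let n, k be positive integers and let λ1 satisfy 1 ≤ λ1 ≤ n−1 (equivalently, with λ0 = n−λ1, neither λ0 nor λ1 lies in {0,n}). Then there does not exist a nonempty set {F_1,…,F_k} of mutually orthogonal binary frequency squares of type (n;λ0,λ1) whose entrywise integer sum F_1+⋯+F_k is a constant matrix. -/
open Finset

lemma sum01 {α : Type*} [Fintype α] (f : α → ℕ) (h : ∀ a, f a = 0 ∨ f a = 1) :
    ∑ a, f a = (univ.filter (fun a => f a = 1)).card := by
  rw [Finset.card_filter]
  apply Finset.sum_congr rfl
  intro a _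
  rcases h a with h'|h' <;> simp [h']

lemma sumprod {n : ℕ} (F G : Fin n → Fin n → ℕ)
    (hF : ∀ i j, F i j = 0 ∨ F i j = 1) (hG : ∀ i j, G i j = 0 ∨ G i j = 1) :
    ∑ p : Fin n × Fin n, F p.1 p.2 * G p.1 p.2 =
      ((univ : Finset (Fin n × Fin n)).filter
        (fun p => F p.1 p.2 = 1 ∧ G p.1 p.2 = 1)).card := by
  rw [Finset.card_filter]
  apply Finset.sum_congr rfl
  intro p _
  rcases hF p.1 p.2 with h1|h1 <;> rcases hG p.1 p.2 with h2|h2 <;> simp [h1, h2]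

/-- If `1 ≤ lam1 ≤ n - 1` (so neither `lam1` nor `lam0 = n - lam1` is `0` or `n`), then
there is no nonempty set of mutually orthogonal binary frequency squares of type
`(n; n - lam1, lam1)` whose entrywise integer sum is a constant matrix. -/
theorem stmt9 (n k lam1 : ℕ) (hn : 0 < n) (hk : 0 < k)
    (h1 : 1 ≤ lam1) (h2 : lam1 ≤ n - 1) :
    ¬ ∃ F : Fin k → Fin n → Fin n → ℕ,
      (∀ t, IsBFS n lam1 (F t)) ∧
      (∀ s t, s ≠ t → OrthBFS n lam1 lam1 (F s) (F t)) ∧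
      (∃ c : ℕ, ∀ i j : Fin n, ∑ t, F t i j = c) := by
  rintro ⟨F, hBFS, hOrth, c, hc⟩
  -- each row of each square sums to lam1
  have hrow : ∀ t (i : Fin n), ∑ j, F t i j = lam1 := fun t i => by
    rw [sum01 _ (fun j => (hBFS t).1 i j)]; exact (hBFS t).2.1 i
  -- n * c = k * lam1
  have i0 : Fin n := ⟨0, hn⟩
  have hnc : n * c = k * lam1 := by
    have ha : ∑ j : Fin n, ∑ t, F t i0 j = n * c := by
      simp [hc, Finset.sum_const, Finset.card_univ, mul_comm]
    have hb : ∑ j : Fin n, ∑ t, F t i0 j = k * lam1 := by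
      rw [Finset.sum_comm]
      simp [hrow, Finset.sum_const, Finset.card_univ]
    omega
  -- diagonal terms
  have hdiag : ∀ t, ∑ p : Fin n × Fin n, F t p.1 p.2 * F t p.1 p.2 = n * lam1 := by
    intro t
    rw [sumprod _ _ ((hBFS t).1) ((hBFS t).1)]
    have h' : ((univ : Finset (Fin n × Fin n)).filter
        (fun p => F t p.1 p.2 = 1 ∧ F t p.1 p.2 = 1)).card
        = ∑ i : Fin n, (univ.filter (fun j => F t i j = 1)).card := by
      rw [Finset.card_filter, Fintype.sum_prod_type]
      refine Finset.sum_congr rfl (fun i _ => ?_)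
      rw [Finset.card_filter]
      exact Finset.sum_congr rfl (fun j _ => by simp)
    rw [h', Finset.sum_congr rfl (fun i _ => (hBFS t).2.1 i)]
    simp [Finset.sum_const, Finset.card_univ, mul_comm]
  -- off-diagonal terms
  have hoff : ∀ s t, s ≠ t →
      ∑ p : Fin n × Fin n, F s p.1 p.2 * F t p.1 p.2 = lam1 * lam1 := by
    intro s t hst
    rw [sumprod _ _ ((hBFS s).1) ((hBFS t).1)]
    exact hOrth s t hst
  -- sum of squares of the constant matrix
  have hsq : ∑ p : Fin n × Fin n, (∑ t, F t p.1 p.2) * (∑ t, F t p.1 p.2)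
      = n * n * (c * c) := by
    have : ∀ p : Fin n × Fin n, (∑ t, F t p.1 p.2) * (∑ t, F t p.1 p.2) = c * c := by
      intro p; rw [hc p.1 p.2]
    rw [Finset.sum_congr rfl (fun p _ => this p)]
    simp [Finset.sum_const, Finset.card_univ, mul_assoc]
  -- expand
  have hexp : ∑ p : Fin n × Fin n, (∑ t, F t p.1 p.2) * (∑ t, F t p.1 p.2)
      = k * (n * lam1) + k * (k - 1) * (lam1 * lam1) := by
    have e1 : ∀ p : Fin n × Fin n, (∑ t, F t p.1 p.2) * (∑ t, F t p.1 p.2)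
        = ∑ s : Fin k, ∑ t : Fin k, F s p.1 p.2 * F t p.1 p.2 := by
      intro p; rw [Finset.sum_mul_sum]
    rw [Finset.sum_congr rfl (fun p _ => e1 p), Finset.sum_comm]
    have e2 : ∀ s : Fin k, ∑ p : Fin n × Fin n, ∑ t : Fin k, F s p.1 p.2 * F t p.1 p.2
        = n * lam1 + (k - 1) * (lam1 * lam1) := by
      intro s
      rw [Finset.sum_comm]
      have e3 : ∀ t : Fin k, ∑ p : Fin n × Fin n, F s p.1 p.2 * F t p.1 p.2
          = if t = s then n * lam1 else lam1 * lam1 := by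
        intro t
        by_cases h : t = s
        · subst h; simp [hdiag t]
        · simp [h, hoff s t (fun hh => h hh.symm)]
      rw [Finset.sum_congr rfl (fun t _ => e3 t)]
      rw [Finset.sum_ite, Finset.filter_eq', if_pos (mem_univ s), Finset.sum_const,
        Finset.sum_const, Finset.filter_ne', Finset.card_erase_of_mem (mem_univ s)]
      simp [Finset.card_univ]
    rw [Finset.sum_congr rfl (fun s _ => e2 s)]
    simp [Finset.sum_const, Finset.card_univ, mul_add, mul_assoc]
  -- conclude
  obtain ⟨m, rfl⟩ : ∃ m, k = m + 1 := ⟨k - 1, by omega⟩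
  rw [hsq] at hexp
  have hexp' : n * n * (c * c)
      = (m + 1) * (n * lam1) + (m + 1) * m * (lam1 * lam1) := by simpa using hexp
  have e : n * c * (n * c) = (m + 1) * lam1 * ((m + 1) * lam1) := by rw [hnc]
  have hsq2 : (m + 1) * (m + 1) * (lam1 * lam1)
      = (m + 1) * (n * lam1) + (m + 1) * m * (lam1 * lam1) := by nlinarith [e, hexp']
  have h3 : (m + 1) * (lam1 * lam1) = (m + 1) * (n * lam1) := by nlinarith [hsq2]
  have hl : lam1 * lam1 = n * lam1 := Nat.eq_of_mul_eq_mul_left (Nat.succ_pos m) h3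
  have : lam1 = n := Nat.eq_of_mul_eq_mul_right h1 hl
  omega
end

section
/- Let {F_1,…,F_k} be a set of k mutually orthogonal binary frequency squares of type (n;λ0,λ1) with ℤ-sum M. Then there exists a set {F'_1,…,F'_k} of k mutually orthogonal binary frequency squares of type (n+kλ1; n+(k−1)λ1, λ1) whose ℤ-sum is the block matrix of order n+kλ1 with M in the top-left n×n corner, the all-ones matrix J_{kλ1} in the bottom-right kλ1×kλ1 corner, and zeros elsewhere. -/
open Finset

open Matrix

/-! Keep `F t` in the top-left corner and index the new `kλ₁ × kλ₁` corner by `Fin k × Fin λ₁`,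
putting into it the square with a `1` at `((a, r), (b, r'))` exactly when `b = a + t`: the
permutation matrix of `a ↦ a + t` inflated by `J_{λ₁}`. It has `λ₁` ones in every line; for
`s ≠ t` the corners of the `s`-th and `t`-th squares have disjoint supports, so orthogonality is
inherited from the `F t`; and since `b = a + t` has exactly one solution `t`, the corners sum to
`J_{kλ₁}`. -/

section FreqSquare

variable {ι κ : Type*} [Fintype ι] [Fintype κ] {lam : ℕ}

def IsFreqSquare (lam : ℕ) (F : Matrix ι ι ℕ) : Prop :=
  (∀ i j, F i j = 0 ∨ F i j = 1) ∧
  (∀ i, #{j | F i j = 1} = lam) ∧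
  (∀ j, #{i | F i j = 1} = lam)

def onesOverlap (F G : Matrix ι ι ℕ) : ℕ :=
  #{p : ι × ι | F p.1 p.2 = 1 ∧ G p.1 p.2 = 1}

theorem isBFS_iff_isFreqSquare {n : ℕ} {F : Matrix (Fin n) (Fin n) ℕ} :
    IsBFS n lam F ↔ IsFreqSquare lam F :=
  Iff.rfl

theorem orthBFS_iff_onesOverlap_eq {n mu : ℕ} {F G : Matrix (Fin n) (Fin n) ℕ} :
    OrthBFS n lam mu F G ↔ onesOverlap F G = lam * mu :=
  Iff.rfl

theorem card_filter_equiv_comp (e : κ ≃ ι) (p : ι → Prop) [DecidablePred p] :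
    #{j | p (e j)} = #{i | p i} := by
  simp only [card_filter]
  exact e.sum_comp fun i => if p i then 1 else 0

theorem card_filter_sum (p : ι ⊕ κ → Prop) [DecidablePred p] :
    #{x | p x} = #{i | p (.inl i)} + #{j | p (.inr j)} := by
  simp only [card_filter, Fintype.sum_sum_type]

theorem card_filter_prod (p : ι × κ → Prop) [DecidablePred p] :
    #{x | p x} = ∑ i, #{j | p (i, j)} := by
  simp only [card_filter, Fintype.sum_prod_type]

theorem IsFreqSquare.submatrix {F : Matrix ι ι ℕ} (hF : IsFreqSquare lam F) (e : κ ≃ ι) :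
    IsFreqSquare lam (F.submatrix e e) := by
  obtain ⟨h01, hrow, hcol⟩ := hF
  refine ⟨fun i j => h01 _ _, fun i => ?_, fun j => ?_⟩
  · rw [← hrow (e i)]
    exact card_filter_equiv_comp e (F (e i) · = 1)
  · rw [← hcol (e j)]
    exact card_filter_equiv_comp e (F · (e j) = 1)

theorem onesOverlap_submatrix (F G : Matrix ι ι ℕ) (e : κ ≃ ι) :
    onesOverlap (F.submatrix e e) (G.submatrix e e) = onesOverlap F G :=
  card_filter_equiv_comp (e.prodCongr e) fun p => F p.1 p.2 = 1 ∧ G p.1 p.2 = 1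

theorem card_filter_fromBlocks_row_eq_one {F : Matrix ι ι ℕ} {G : Matrix κ κ ℕ}
    (hF : ∀ i, #{j | F i j = 1} = lam) (hG : ∀ i, #{j | G i j = 1} = lam) :
    ∀ x, #{y | fromBlocks F 0 0 G x y = 1} = lam
  | .inl i => calc
      _ = #{j | F i j = 1} + #{j | (0 : Matrix ι κ ℕ) i j = 1} := card_filter_sum _
      _ = lam := by simp [hF]
  | .inr i => calc
      _ = #{j | (0 : Matrix κ ι ℕ) i j = 1} + #{j | G i j = 1} := card_filter_sum _
      _ = lam := by simp [hG]

theorem IsFreqSquare.fromBlocks {F : Matrix ι ι ℕ} {G : Matrix κ κ ℕ}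
    (hF : IsFreqSquare lam F) (hG : IsFreqSquare lam G) :
    IsFreqSquare lam (Matrix.fromBlocks F 0 0 G) := by
  refine ⟨?_, card_filter_fromBlocks_row_eq_one hF.2.1 hG.2.1, fun y => ?_⟩
  · rintro (i | i) (j | j) <;> simp [hF.1, hG.1]
  · have hT : (Matrix.fromBlocks F 0 0 G)ᵀ = Matrix.fromBlocks Fᵀ 0 0 Gᵀ := by
      simp [fromBlocks_transpose]
    have h := card_filter_fromBlocks_row_eq_one (F := Fᵀ) (G := Gᵀ) hF.2.2 hG.2.2 y
    rw [← hT] at h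
    exact h

theorem onesOverlap_fromBlocks (F F' : Matrix ι ι ℕ) (G G' : Matrix κ κ ℕ) :
    onesOverlap (fromBlocks F 0 0 G) (fromBlocks F' 0 0 G') =
      onesOverlap F F' + onesOverlap G G' := by
  simp only [onesOverlap, card_filter_prod, card_filter_sum, Fintype.sum_sum_type,
    fromBlocks_apply₁₁, fromBlocks_apply₁₂, fromBlocks_apply₂₁, fromBlocks_apply₂₂,
    Matrix.zero_apply, zero_ne_one, and_self, filter_false, card_empty, add_zero, zero_add]
  -- `simp` keeps decidability instances that still mention `fromBlocks`; they unfold to the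
  -- expected ones.
  rfl

end FreqSquare

theorem card_filter_fst_eq {α β : Type*} [Fintype α] [DecidableEq α] [Fintype β] (a : α) :
    #{q : α × β | q.1 = a} = Fintype.card β := by
  simp only [card_filter, Fintype.sum_prod_type]
  simp [apply_ite]

section AddShiftSquare

variable {A : Type*} [Add A] [IsCancelAdd A] [Fintype A]

theorem exists_forall_eq_add_iff_left (t b : A) : ∃ a₀, ∀ a, b = a + t ↔ a = a₀ := by
  obtain ⟨a₀, rfl⟩ := Finite.injective_iff_surjective.mp (add_left_injective t) b
  exact ⟨a₀, fun a => eq_comm.trans (add_left_injective t).eq_iff⟩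

theorem exists_forall_eq_add_iff_right (a b : A) : ∃ t₀, ∀ t, b = a + t ↔ t = t₀ := by
  obtain ⟨t₀, rfl⟩ := Finite.injective_iff_surjective.mp (add_right_injective a) b
  exact ⟨t₀, fun t => eq_comm.trans (add_right_injective a).eq_iff⟩

variable [DecidableEq A]

variable (β : Type*) in
def addShiftSquare (t : A) : Matrix (A × β) (A × β) ℕ :=
  fun p q => if q.1 = p.1 + t then 1 else 0

theorem isFreqSquare_addShiftSquare (β : Type*) [Fintype β] (t : A) :
    IsFreqSquare (Fintype.card β) (addShiftSquare β t) := by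
  refine ⟨fun p q => ?_, fun p => ?_, fun q => ?_⟩
  · unfold addShiftSquare; split_ifs <;> simp
  · rw [← card_filter_fst_eq (β := β) (p.1 + t)]
    congr 1; ext q; simp [addShiftSquare]
  · obtain ⟨a₀, ha₀⟩ := exists_forall_eq_add_iff_left t q.1
    rw [← card_filter_fst_eq (β := β) a₀]
    congr 1; ext p; simp [addShiftSquare, ha₀]

theorem onesOverlap_addShiftSquare {β : Type*} [Fintype β] {s t : A} (hst : s ≠ t) :
    onesOverlap (addShiftSquare β s) (addShiftSquare β t) = 0 := by
  simp only [onesOverlap, card_eq_zero, filter_eq_empty_iff]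
  rintro ⟨p, q⟩ - ⟨hs, ht⟩
  simp only [addShiftSquare, ite_eq_left_iff, zero_ne_one, imp_false, not_not] at hs ht
  exact hst (add_left_cancel (hs.symm.trans ht))

theorem sum_addShiftSquare {β : Type*} (p q : A × β) : ∑ t, addShiftSquare β t p q = 1 := by
  obtain ⟨t₀, ht₀⟩ := exists_forall_eq_add_iff_right p.1 q.1
  simp [addShiftSquare, ht₀]

end AddShiftSquare

theorem finSumFinEquiv_symm_apply_of_lt {m n : ℕ} {i : Fin (m + n)} (h : (i : ℕ) < m) :
    finSumFinEquiv.symm i = .inl ⟨i, h⟩ :=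
  finSumFinEquiv_symm_apply_castAdd ⟨i, h⟩

theorem finSumFinEquiv_symm_apply_of_le {m n : ℕ} {i : Fin (m + n)} (h : m ≤ (i : ℕ)) :
    finSumFinEquiv.symm i = .inr ⟨i - m, by omega⟩ := by
  have hi : Fin.natAdd m ⟨i - m, by omega⟩ = i := Fin.ext (by simp only [Fin.val_natAdd]; omega)
  rw [← finSumFinEquiv_symm_apply_natAdd, hi]

section OnesCorner

variable {n k : ℕ}

def cornerIndexEquiv (n k lam : ℕ) : Fin (n + k * lam) ≃ Fin n ⊕ (Fin k × Fin lam) :=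
  finSumFinEquiv.symm.trans (Equiv.sumCongr (Equiv.refl _) finProdFinEquiv.symm)

def addOnesCorner (lam : ℕ) (F : Fin k → Matrix (Fin n) (Fin n) ℕ) (t : Fin k) :
    Matrix (Fin (n + k * lam)) (Fin (n + k * lam)) ℕ :=
  (fromBlocks (F t) 0 0 (addShiftSquare (Fin lam) t)).submatrix
    (cornerIndexEquiv n k lam) (cornerIndexEquiv n k lam)

theorem cornerIndexEquiv_apply_of_lt {lam : ℕ} {i : Fin (n + k * lam)} (h : (i : ℕ) < n) :
    cornerIndexEquiv n k lam i = .inl ⟨i, h⟩ := by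
  simp [cornerIndexEquiv, finSumFinEquiv_symm_apply_of_lt h]

theorem exists_cornerIndexEquiv_apply_of_le {lam : ℕ} {i : Fin (n + k * lam)} (h : n ≤ (i : ℕ)) :
    ∃ p, cornerIndexEquiv n k lam i = .inr p := by
  simp [cornerIndexEquiv, finSumFinEquiv_symm_apply_of_le h]

variable {lam : ℕ} {F : Fin k → Matrix (Fin n) (Fin n) ℕ}

theorem isBFS_addOnesCorner (hF : ∀ t, IsBFS n lam (F t)) (t : Fin k) :
    IsBFS (n + k * lam) lam (addOnesCorner lam F t) := by
  have hG := isFreqSquare_addShiftSquare (Fin lam) t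
  rw [Fintype.card_fin] at hG
  exact ((isBFS_iff_isFreqSquare.mp (hF t)).fromBlocks hG).submatrix _

theorem orthBFS_addOnesCorner {s t : Fin k} (hst : s ≠ t) (h : OrthBFS n lam lam (F s) (F t)) :
    OrthBFS (n + k * lam) lam lam (addOnesCorner lam F s) (addOnesCorner lam F t) := by
  rw [orthBFS_iff_onesOverlap_eq, addOnesCorner, addOnesCorner, onesOverlap_submatrix,
    onesOverlap_fromBlocks, onesOverlap_addShiftSquare hst, add_zero]
  exact h

theorem addOnesCorner_apply_of_lt_of_lt (t : Fin k) {i j : Fin (n + k * lam)}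
    (hi : (i : ℕ) < n) (hj : (j : ℕ) < n) :
    addOnesCorner lam F t i j = F t ⟨i, hi⟩ ⟨j, hj⟩ := by
  simp [addOnesCorner, cornerIndexEquiv_apply_of_lt hi, cornerIndexEquiv_apply_of_lt hj]

theorem addOnesCorner_apply_of_lt_of_le (t : Fin k) {i j : Fin (n + k * lam)}
    (hi : (i : ℕ) < n) (hj : n ≤ (j : ℕ)) : addOnesCorner lam F t i j = 0 := by
  obtain ⟨q, hq⟩ := exists_cornerIndexEquiv_apply_of_le (k := k) hj
  simp [addOnesCorner, cornerIndexEquiv_apply_of_lt hi, hq]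

theorem addOnesCorner_apply_of_le_of_lt (t : Fin k) {i j : Fin (n + k * lam)}
    (hi : n ≤ (i : ℕ)) (hj : (j : ℕ) < n) : addOnesCorner lam F t i j = 0 := by
  obtain ⟨p, hp⟩ := exists_cornerIndexEquiv_apply_of_le (k := k) hi
  simp [addOnesCorner, hp, cornerIndexEquiv_apply_of_lt hj]

theorem sum_addOnesCorner_of_le_of_le {i j : Fin (n + k * lam)}
    (hi : n ≤ (i : ℕ)) (hj : n ≤ (j : ℕ)) : ∑ t, addOnesCorner lam F t i j = 1 := by
  obtain ⟨p, hp⟩ := exists_cornerIndexEquiv_apply_of_le (k := k) hi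
  obtain ⟨q, hq⟩ := exists_cornerIndexEquiv_apply_of_le (k := k) hj
  simp [addOnesCorner, hp, hq, sum_addShiftSquare]

end OnesCorner

theorem stmt10_general (k n lam1 : ℕ)
    (F : Fin k → Fin n → Fin n → ℕ)
    (hF : ∀ t, IsBFS n lam1 (F t))
    (hMO : ∀ s t, s ≠ t → OrthBFS n lam1 lam1 (F s) (F t)) :
    ∃ F' : Fin k → Fin (n + k * lam1) → Fin (n + k * lam1) → ℕ,
      (∀ t, IsBFS (n + k * lam1) lam1 (F' t)) ∧
      (∀ s t, s ≠ t → OrthBFS (n + k * lam1) lam1 lam1 (F' s) (F' t)) ∧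
      (∀ i j : Fin n,
        ∑ t, F' t (Fin.castLE (Nat.le_add_right n (k * lam1)) i)
               (Fin.castLE (Nat.le_add_right n (k * lam1)) j) = ∑ t, F t i j) ∧
      (∀ i j : Fin (n + k * lam1), (i : ℕ) < n → n ≤ (j : ℕ) → ∑ t, F' t i j = 0) ∧
      (∀ i j : Fin (n + k * lam1), n ≤ (i : ℕ) → (j : ℕ) < n → ∑ t, F' t i j = 0) ∧
      (∀ i j : Fin (n + k * lam1), n ≤ (i : ℕ) → n ≤ (j : ℕ) → ∑ t, F' t i j = 1) :=
  ⟨addOnesCorner lam1 F, isBFS_addOnesCorner hF,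
    fun s t hst => orthBFS_addOnesCorner hst (hMO s t hst),
    fun i j => sum_congr rfl fun t _ => addOnesCorner_apply_of_lt_of_lt t i.isLt j.isLt,
    fun _ _ hi hj => sum_eq_zero fun t _ => addOnesCorner_apply_of_lt_of_le t hi hj,
    fun _ _ hi hj => sum_eq_zero fun t _ => addOnesCorner_apply_of_le_of_lt t hi hj,
    fun _ _ hi hj => sum_addOnesCorner_of_le_of_le hi hj⟩

/-- Adding an all-ones corner: from a set of `k` mutually orthogonal binary frequency
squares of type `(n; lam0, lam1)` with `ℤ`-sum `M` one obtains a set of `k` mutually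
orthogonal binary frequency squares of type `(n + k·lam1; n + (k-1)·lam1, lam1)` whose
`ℤ`-sum is the block matrix with `M` in the top-left `n × n` corner, the all-ones matrix
`J_{k·lam1}` in the bottom-right corner, and zeros elsewhere. -/
theorem stmt10 (k n lam0 lam1 : ℕ) (hlam : lam0 + lam1 = n)
    (F : Fin k → Fin n → Fin n → ℕ)
    (hF : ∀ t, IsBFS n lam1 (F t))
    (hMO : ∀ s t, s ≠ t → OrthBFS n lam1 lam1 (F s) (F t)) :
    ∃ F' : Fin k → Fin (n + k * lam1) → Fin (n + k * lam1) → ℕ,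
      (∀ t, IsBFS (n + k * lam1) lam1 (F' t)) ∧
      (∀ s t, s ≠ t → OrthBFS (n + k * lam1) lam1 lam1 (F' s) (F' t)) ∧
      (∀ i j : Fin n,
        ∑ t, F' t (Fin.castLE (Nat.le_add_right n (k * lam1)) i)
               (Fin.castLE (Nat.le_add_right n (k * lam1)) j) = ∑ t, F t i j) ∧
      (∀ i j : Fin (n + k * lam1), (i : ℕ) < n → n ≤ (j : ℕ) → ∑ t, F' t i j = 0) ∧
      (∀ i j : Fin (n + k * lam1), n ≤ (i : ℕ) → (j : ℕ) < n → ∑ t, F' t i j = 0) ∧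
      (∀ i j : Fin (n + k * lam1), n ≤ (i : ℕ) → n ≤ (j : ℕ) → ∑ t, F' t i j = 1) :=
  stmt10_general k n lam1 F hF hMO
end

section
/- Let n, λ1, k be positive integers and let (B_{i,j})_{1≤i,j≤n} be an n×n array of subsets of {1,…,k} such that: each point x belongs to exactly λ1 of the blocks in each row and to exactly λ1 of the blocks in each column, and each pair of distinct points belongs to exactly λ1² of the n² blocks. Suppose moreover that there is a positive integer w such that: (i) |B_{i,j}| ≡ w−1 (mod w) for all i,j; (ii) λ1 or n+(k−1)λ1 is coprime to w; and (iii) n ≢ 0 (mod w). Then there exists a type-maximal set of k mutually orthogonal binary frequency squares of type (n+kλ1; n+(k−1)λ1, λ1), i.e., a set of k pairwise orthogonal binary frequency squares of that type such that no binary frequency square of the same type is orthogonal to all of them. -/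
open Finset

lemma sum_range_split {M : Type*} [AddCommMonoid M] (f : ℕ → M) (n m : ℕ) :
    ∑ j ∈ range (n + m), f j = ∑ j ∈ range n, f j + ∑ c ∈ range m, f (n + c) := by
  have h2 : ∑ j ∈ Ico n (n + m), f j = ∑ c ∈ range m, f (n + c) := by
    rw [Finset.sum_Ico_eq_sum_range]; simp
  calc ∑ j ∈ range (n + m), f j = ∑ j ∈ Ico 0 (n + m), f j := by rw [range_eq_Ico]
    _ = ∑ j ∈ Ico 0 n, f j + ∑ j ∈ Ico n (n + m), f j :=
        (Finset.sum_Ico_consecutive f (Nat.zero_le n) (Nat.le_add_right n m)).symm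
    _ = ∑ j ∈ range n, f j + ∑ c ∈ range m, f (n + c) := by rw [← range_eq_Ico, h2]

lemma modcancel (k a b x : ℕ) (h : a + b = k) : ((x + a) % k + b) % k = x % k := by
  rw [Nat.mod_add_mod, show x + a + b = x + k by omega, Nat.add_mod_right]

lemma mod_shift_iff (k t u : ℕ) (ht : t < k) (hu : u < k) (x : ℕ) (hx : x < k) :
    (x + t) % k = u ↔ x = (u + (k - t)) % k := by
  constructor
  · intro h
    rw [← h, modcancel k t (k - t) x (by omega)]
    exact (Nat.mod_eq_of_lt hx).symm
  · intro h
    subst h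
    rw [modcancel k (k - t) t u (by omega)]
    exact Nat.mod_eq_of_lt hu

lemma add_mod_inj (k x s t : ℕ) (hx : x < k) (hs : s < k) (ht : t < k)
    (h : (x + s) % k = (x + t) % k) : s = t := by
  have h1 : ((x + s) % k + (k - x)) % k = s := by
    rw [add_comm x s, modcancel k x (k - x) s (by omega)]
    exact Nat.mod_eq_of_lt hs
  have h2 : ((x + t) % k + (k - x)) % k = t := by
    rw [add_comm x t, modcancel k x (k - x) t (by omega)]
    exact Nat.mod_eq_of_lt ht
  rw [h] at h1
  exact h1.symm.trans h2

lemma count_div (lam1 k v : ℕ) (hl : 0 < lam1) (hv : v < k) :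
    ((range (k * lam1)).filter (fun c => c / lam1 = v)).card = lam1 := by
  have he : (range (k * lam1)).filter (fun c => c / lam1 = v)
      = Ico (v * lam1) (v * lam1 + lam1) := by
    ext c
    simp only [mem_filter, mem_range, mem_Ico]
    constructor
    · rintro ⟨hc, rfl⟩
      refine ⟨Nat.div_mul_le_self c lam1, ?_⟩
      have h2 : c < (c / lam1 + 1) * lam1 := by
        rw [← Nat.div_lt_iff_lt_mul hl]; omega
      rw [add_mul] at h2; omega
    · rintro ⟨h1, h2⟩
      have hd : c / lam1 = v := Nat.div_eq_of_lt_le h1 (by rw [add_mul]; omega)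
      refine ⟨?_, hd⟩
      have : (v + 1) * lam1 ≤ k * lam1 := Nat.mul_le_mul_right lam1 hv
      rw [add_mul] at this; omega
  rw [he, Nat.card_Ico]; omega

lemma count_fin_val (k v : ℕ) (hv : v < k) :
    ((univ : Finset (Fin k)).filter (fun t => t.val = v)).card = 1 := by
  have : ((univ : Finset (Fin k)).filter (fun t => t.val = v))
      = {(⟨v, hv⟩ : Fin k)} := by
    ext t; simp [Fin.ext_iff]
  rw [this, card_singleton]

lemma ind_mul (P Q : Prop) [Decidable P] [Decidable Q] :
    (if P then (1:ℕ) else 0) * (if Q then 1 else 0) = if P ∧ Q then 1 else 0 := by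
  split_ifs with h1 h2 h3 <;> simp_all

/-- The construction: `n×n` top-left corner is the indicator of `t ∈ B i j`; the
bottom-right `(k·lam1)×(k·lam1)` corner is a block-circulant; elsewhere `0`. -/
def dkFS (n lam1 k : ℕ) (B : Fin n → Fin n → Finset (Fin k)) (t : Fin k) (i j : ℕ) : ℕ :=
  if hi : i < n then (if hj : j < n then (if t ∈ B ⟨i, hi⟩ ⟨j, hj⟩ then 1 else 0) else 0)
  else if j < n then 0
  else if (j - n) / lam1 = ((i - n) / lam1 + t.val) % k then 1 else 0

section DK

variable (n lam1 k : ℕ) (B : Fin n → Fin n → Finset (Fin k))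

lemma dkFS_bool (t : Fin k) (i j : ℕ) :
    dkFS n lam1 k B t i j = 0 ∨ dkFS n lam1 k B t i j = 1 := by
  unfold dkFS; split_ifs <;> simp

lemma dkFS_row (hl : 0 < lam1) (hk : 0 < k)
    (hrow : ∀ i : Fin n, ∀ x : Fin k,
      (univ.filter (fun j : Fin n => x ∈ B i j)).card = lam1)
    (t : Fin k) (i : ℕ) (hi : i < n + k * lam1) :
    ∑ j ∈ range (n + k * lam1), dkFS n lam1 k B t i j = lam1 := by
  rw [sum_range_split]
  by_cases hin : i < n
  · have h1 : ∑ j ∈ range n, dkFS n lam1 k B t i j = lam1 := by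
      rw [← Fin.sum_univ_eq_sum_range (fun j => dkFS n lam1 k B t i j) n]
      rw [← hrow ⟨i, hin⟩ t, card_filter]
      refine Finset.sum_congr rfl fun j _ => ?_
      simp [dkFS, hin, j.isLt]
    have h2 : ∀ c ∈ range (k * lam1), dkFS n lam1 k B t i (n + c) = 0 := by
      intro c _
      simp [dkFS, hin, show ¬ (n + c < n) by omega]
    rw [h1, Finset.sum_congr rfl h2]
    simp
  · have h1 : ∀ j ∈ range n, dkFS n lam1 k B t i j = 0 := by
      intro j hj
      simp only [mem_range] at hj
      simp [dkFS, hin, hj]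
    have h2 : ∑ c ∈ range (k * lam1), dkFS n lam1 k B t i (n + c) = lam1 := by
      have hc : ∀ c, dkFS n lam1 k B t i (n + c)
          = if c / lam1 = ((i - n) / lam1 + t.val) % k then 1 else 0 := by
        intro c
        simp [dkFS, hin, show ¬ (n + c < n) by omega, Nat.add_sub_cancel_left]
      calc ∑ c ∈ range (k * lam1), dkFS n lam1 k B t i (n + c)
          = ∑ c ∈ range (k * lam1),
              if c / lam1 = ((i - n) / lam1 + t.val) % k then 1 else 0 :=
            Finset.sum_congr rfl fun c _ => hc c
        _ = ((range (k * lam1)).filter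
              (fun c => c / lam1 = ((i - n) / lam1 + t.val) % k)).card :=
            (card_filter _ _).symm
        _ = lam1 := count_div lam1 k _ hl (Nat.mod_lt _ hk)
    rw [Finset.sum_congr rfl h1, h2]
    simp

lemma dkFS_col (hl : 0 < lam1) (hk : 0 < k)
    (hcol : ∀ j : Fin n, ∀ x : Fin k,
      (univ.filter (fun i : Fin n => x ∈ B i j)).card = lam1)
    (t : Fin k) (j : ℕ) (hj : j < n + k * lam1) :
    ∑ i ∈ range (n + k * lam1), dkFS n lam1 k B t i j = lam1 := by
  rw [sum_range_split]
  by_cases hjn : j < n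
  · have h1 : ∑ i ∈ range n, dkFS n lam1 k B t i j = lam1 := by
      rw [← Fin.sum_univ_eq_sum_range (fun i => dkFS n lam1 k B t i j) n]
      rw [← hcol ⟨j, hjn⟩ t, card_filter]
      refine Finset.sum_congr rfl fun i _ => ?_
      simp [dkFS, hjn, i.isLt]
    have h2 : ∀ r ∈ range (k * lam1), dkFS n lam1 k B t (n + r) j = 0 := by
      intro r _
      simp [dkFS, show ¬ (n + r < n) by omega, hjn]
    rw [h1, Finset.sum_congr rfl h2]
    simp
  · have h1 : ∀ i ∈ range n, dkFS n lam1 k B t i j = 0 := by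
      intro i hi
      simp only [mem_range] at hi
      simp [dkFS, hi, hjn]
    have hu : (j - n) / lam1 < k := by
      rw [Nat.div_lt_iff_lt_mul hl]; omega
    have h2 : ∑ r ∈ range (k * lam1), dkFS n lam1 k B t (n + r) j = lam1 := by
      have hc : ∀ r ∈ range (k * lam1), dkFS n lam1 k B t (n + r) j
          = if r / lam1 = ((j - n) / lam1 + (k - t.val)) % k then 1 else 0 := by
        intro r hr
        simp only [mem_range] at hr
        have hrk : r / lam1 < k := by rw [Nat.div_lt_iff_lt_mul hl]; omega
        have : ((j - n) / lam1 = (r / lam1 + t.val) % k)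
            ↔ (r / lam1 = ((j - n) / lam1 + (k - t.val)) % k) := by
          rw [eq_comm]
          exact mod_shift_iff k t.val ((j - n) / lam1) t.isLt hu (r / lam1) hrk
        simp only [dkFS, dif_neg (show ¬ (n + r < n) by omega), if_neg hjn,
          Nat.add_sub_cancel_left]
        rw [if_congr this rfl rfl]
      calc ∑ r ∈ range (k * lam1), dkFS n lam1 k B t (n + r) j
          = ∑ r ∈ range (k * lam1),
              if r / lam1 = ((j - n) / lam1 + (k - t.val)) % k then 1 else 0 :=
            Finset.sum_congr rfl hc
        _ = ((range (k * lam1)).filter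
              (fun r => r / lam1 = ((j - n) / lam1 + (k - t.val)) % k)).card :=
            (card_filter _ _).symm
        _ = lam1 := count_div lam1 k _ hl (Nat.mod_lt _ hk)
    rw [Finset.sum_congr rfl h1, h2]
    simp

lemma dkFS_orth (hl : 0 < lam1) (hk : 0 < k)
    (hpair : ∀ x y : Fin k, x ≠ y →
      ((univ : Finset (Fin n × Fin n)).filter
        (fun p => x ∈ B p.1 p.2 ∧ y ∈ B p.1 p.2)).card = lam1 ^ 2)
    (s t : Fin k) (hst : s ≠ t) :
    ∑ i ∈ range (n + k * lam1), ∑ j ∈ range (n + k * lam1),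
      dkFS n lam1 k B s i j * dkFS n lam1 k B t i j = lam1 ^ 2 := by
  have hTL : ∑ i ∈ range n, ∑ j ∈ range n,
      dkFS n lam1 k B s i j * dkFS n lam1 k B t i j = lam1 ^ 2 := by
    have hp := hpair s t hst
    rw [card_filter, Fintype.sum_prod_type] at hp
    rw [← hp, ← Fin.sum_univ_eq_sum_range
      (fun i => ∑ j ∈ range n, dkFS n lam1 k B s i j * dkFS n lam1 k B t i j) n]
    refine Finset.sum_congr rfl fun i _ => ?_
    rw [← Fin.sum_univ_eq_sum_range
      (fun j => dkFS n lam1 k B s i.val j * dkFS n lam1 k B t i.val j) n]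
    refine Finset.sum_congr rfl fun j _ => ?_
    simp only [dkFS, dif_pos i.isLt, dif_pos j.isLt, Fin.eta]
    rw [ind_mul]
  have hTR : ∀ i ∈ range n, ∀ c ∈ range (k * lam1),
      dkFS n lam1 k B s i (n + c) * dkFS n lam1 k B t i (n + c) = 0 := by
    intro i hi c _
    simp only [mem_range] at hi
    simp [dkFS, hi, show ¬ (n + c < n) by omega]
  have hBL : ∀ r ∈ range (k * lam1), ∀ j ∈ range n,
      dkFS n lam1 k B s (n + r) j * dkFS n lam1 k B t (n + r) j = 0 := by
    intro r _ j hj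
    simp only [mem_range] at hj
    simp [dkFS, show ¬ (n + r < n) by omega, hj]
  have hBR : ∀ r ∈ range (k * lam1), ∀ c ∈ range (k * lam1),
      dkFS n lam1 k B s (n + r) (n + c) * dkFS n lam1 k B t (n + r) (n + c) = 0 := by
    intro r hr c _
    simp only [mem_range] at hr
    have hx : r / lam1 < k := by rw [Nat.div_lt_iff_lt_mul hl]; omega
    simp only [dkFS, dif_neg (show ¬ (n + r < n) by omega),
      if_neg (show ¬ (n + c < n) by omega), Nat.add_sub_cancel_left]
    split_ifs with h1 h2
    · exact absurd (Fin.ext (add_mod_inj k (r / lam1) s.val t.val hx s.isLt t.isLt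
        (h1.symm.trans h2))) hst
    all_goals simp
  rw [sum_range_split (fun i => ∑ j ∈ range (n + k * lam1),
      dkFS n lam1 k B s i j * dkFS n lam1 k B t i j) n (k * lam1)]
  have e1 : ∑ i ∈ range n, ∑ j ∈ range (n + k * lam1),
      dkFS n lam1 k B s i j * dkFS n lam1 k B t i j = lam1 ^ 2 := by
    rw [Finset.sum_congr rfl (fun i hi => sum_range_split
      (fun j => dkFS n lam1 k B s i j * dkFS n lam1 k B t i j) n (k * lam1)),
      Finset.sum_add_distrib, hTL]
    have : ∑ i ∈ range n, ∑ c ∈ range (k * lam1),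
        dkFS n lam1 k B s i (n + c) * dkFS n lam1 k B t i (n + c) = 0 :=
      Finset.sum_eq_zero fun i hi => Finset.sum_eq_zero fun c hc => hTR i hi c hc
    rw [this, add_zero]
  have e2 : ∑ r ∈ range (k * lam1), ∑ j ∈ range (n + k * lam1),
      dkFS n lam1 k B s (n + r) j * dkFS n lam1 k B t (n + r) j = 0 := by
    refine Finset.sum_eq_zero fun r hr => ?_
    rw [sum_range_split (fun j => dkFS n lam1 k B s (n + r) j
        * dkFS n lam1 k B t (n + r) j) n (k * lam1)]
    rw [Finset.sum_eq_zero (fun j hj => hBL r hr j hj),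
      Finset.sum_eq_zero (fun c hc => hBR r hr c hc), add_zero]
  rw [e1, e2, add_zero]

lemma dkFS_tsum_tl (i j : Fin n) :
    ∑ t : Fin k, dkFS n lam1 k B t i.val j.val = (B i j).card := by
  have : ∀ t : Fin k, dkFS n lam1 k B t i.val j.val
      = if t ∈ B i j then 1 else 0 := by
    intro t; simp [dkFS, i.isLt, j.isLt]
  rw [Finset.sum_congr rfl fun t _ => this t, ← card_filter]
  congr 1
  ext x; simp

lemma dkFS_tsum_br (hl : 0 < lam1) (hk : 0 < k) (r c : ℕ)
    (hr : r < k * lam1) (hc : c < k * lam1) :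
    ∑ t : Fin k, dkFS n lam1 k B t (n + r) (n + c) = 1 := by
  have hx : r / lam1 < k := by rw [Nat.div_lt_iff_lt_mul hl]; omega
  have hu : c / lam1 < k := by rw [Nat.div_lt_iff_lt_mul hl]; omega
  have key : ∀ t : Fin k, dkFS n lam1 k B t (n + r) (n + c)
      = if t.val = (c / lam1 + (k - r / lam1)) % k then 1 else 0 := by
    intro t
    simp only [dkFS, dif_neg (show ¬ (n + r < n) by omega),
      if_neg (show ¬ (n + c < n) by omega), Nat.add_sub_cancel_left]
    refine if_congr ?_ rfl rfl
    rw [add_comm (r / lam1) t.val, eq_comm]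
    exact mod_shift_iff k (r / lam1) (c / lam1) hx hu t.val t.isLt
  rw [Finset.sum_congr rfl fun t _ => key t, ← card_filter]
  exact count_fin_val k _ (Nat.mod_lt _ hk)

end DK

lemma card_pair_filter_eq (N : ℕ) (F G : Fin N → Fin N → ℕ)
    (hF : ∀ i j, F i j = 0 ∨ F i j = 1) (hG : ∀ i j, G i j = 0 ∨ G i j = 1) :
    ((univ : Finset (Fin N × Fin N)).filter
      (fun p => F p.1 p.2 = 1 ∧ G p.1 p.2 = 1)).card
      = ∑ i : Fin N, ∑ j : Fin N, F i j * G i j := by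
  rw [card_filter, Fintype.sum_prod_type]
  refine Finset.sum_congr rfl fun i _ => Finset.sum_congr rfl fun j _ => ?_
  rcases hF i j with h | h <;> rcases hG i j with h' | h' <;> simp [h, h']

lemma card_row_filter (N : ℕ) (f : Fin N → ℕ) (hf : ∀ j, f j = 0 ∨ f j = 1) :
    (univ.filter (fun j => f j = 1)).card = ∑ j : Fin N, f j := by
  rw [card_filter]
  refine Finset.sum_congr rfl fun j _ => ?_
  rcases hf j with h | h <;> simp [h]

/-- From a Doehlert–Klee design presented as an `n × n` array of blocks `B i j ⊆ {1, …, k}`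
(each point in exactly `lam1` blocks of each row and column, each pair of distinct points
in exactly `lam1²` blocks), if all block sizes are `≡ w - 1 (mod w)`, `lam1` or
`n + (k-1)·lam1` is coprime to `w`, and `w ∤ n`, then there exists a type-maximal set of
`k` mutually orthogonal binary frequency squares of type
`(n + k·lam1; n + (k-1)·lam1, lam1)`. -/
theorem stmt12 (n lam1 k w : ℕ) (hn : 0 < n) (hl : 0 < lam1) (hk : 0 < k) (hw : 0 < w)
    (B : Fin n → Fin n → Finset (Fin k))
    (hrow : ∀ i : Fin n, ∀ x : Fin k, (univ.filter (fun j : Fin n => x ∈ B i j)).card = lam1)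
    (hcol : ∀ j : Fin n, ∀ x : Fin k, (univ.filter (fun i : Fin n => x ∈ B i j)).card = lam1)
    (hpair : ∀ x y : Fin k, x ≠ y →
      ((univ : Finset (Fin n × Fin n)).filter
        (fun p => x ∈ B p.1 p.2 ∧ y ∈ B p.1 p.2)).card = lam1 ^ 2)
    (hsize : ∀ i j : Fin n, (B i j).card ≡ w - 1 [MOD w])
    (hcop : Nat.Coprime lam1 w ∨ Nat.Coprime (n + (k - 1) * lam1) w)
    (hnw : ¬ w ∣ n) :
    ∃ F : Fin k → Fin (n + k * lam1) → Fin (n + k * lam1) → ℕ,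
      (∀ t, IsBFS (n + k * lam1) lam1 (F t)) ∧
      (∀ s t, s ≠ t → OrthBFS (n + k * lam1) lam1 lam1 (F s) (F t)) ∧
      ¬ ∃ G : Fin (n + k * lam1) → Fin (n + k * lam1) → ℕ,
        IsBFS (n + k * lam1) lam1 G ∧ ∀ t, OrthBFS (n + k * lam1) lam1 lam1 (F t) G := by

  classical
  haveI : NeZero w := ⟨hw.ne'⟩
  refine ⟨fun t i j => dkFS n lam1 k B t i.val j.val, ?_, ?_, ?_⟩
  · -- each square is a BFS
    intro t
    refine ⟨fun i j => dkFS_bool n lam1 k B t i.val j.val, fun i => ?_, fun j => ?_⟩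
    · rw [card_row_filter _ _ (fun j => dkFS_bool n lam1 k B t i.val j.val),
        Fin.sum_univ_eq_sum_range (fun j => dkFS n lam1 k B t i.val j) (n + k * lam1)]
      exact dkFS_row n lam1 k B hl hk hrow t i.val i.isLt
    · rw [card_row_filter _ _ (fun i => dkFS_bool n lam1 k B t i.val j.val),
        Fin.sum_univ_eq_sum_range (fun i => dkFS n lam1 k B t i j.val) (n + k * lam1)]
      exact dkFS_col n lam1 k B hl hk hcol t j.val j.isLt
  · -- pairwise orthogonal
    intro s t hst
    rw [OrthBFS, card_pair_filter_eq _ _ _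
      (fun i j => dkFS_bool n lam1 k B s i.val j.val)
      (fun i j => dkFS_bool n lam1 k B t i.val j.val)]
    rw [Fin.sum_univ_eq_sum_range (fun i => ∑ j : Fin (n + k * lam1),
      dkFS n lam1 k B s i j.val * dkFS n lam1 k B t i j.val) (n + k * lam1)]
    rw [Finset.sum_congr rfl (fun i _ => Fin.sum_univ_eq_sum_range
      (fun j => dkFS n lam1 k B s i j * dkFS n lam1 k B t i j) (n + k * lam1))]
    rw [dkFS_orth n lam1 k B hl hk hpair s t hst]
    ring
  · -- type-maximality
    rintro ⟨G, ⟨hGb, hGr, hGc⟩, horth⟩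
    set g : ℕ → ℕ → ℕ := fun i j =>
      if hi : i < n + k * lam1 then
        if hj : j < n + k * lam1 then G ⟨i, hi⟩ ⟨j, hj⟩ else 0
      else 0 with hg
    have hgval : ∀ i j : Fin (n + k * lam1), g i.val j.val = G i j := by
      intro i j
      simp only [hg, dif_pos i.isLt, dif_pos j.isLt, Fin.eta]
    have hgb : ∀ i j : ℕ, g i j = 0 ∨ g i j = 1 := by
      intro i j
      simp only [hg]
      split_ifs with h1 h2
      · exact hGb _ _
      · exact Or.inl rfl
      · exact Or.inl rfl
    have hgrow : ∀ i : ℕ, i < n + k * lam1 →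
        ∑ j ∈ range (n + k * lam1), g i j = lam1 := by
      intro i hi
      rw [← Fin.sum_univ_eq_sum_range (fun j => g i j) (n + k * lam1)]
      rw [Finset.sum_congr rfl (fun j _ => hgval ⟨i, hi⟩ j)]
      rw [← card_row_filter _ _ (fun j => hGb ⟨i, hi⟩ j)]
      exact hGr ⟨i, hi⟩
    have hgcol : ∀ j : ℕ, j < n + k * lam1 →
        ∑ i ∈ range (n + k * lam1), g i j = lam1 := by
      intro j hj
      rw [← Fin.sum_univ_eq_sum_range (fun i => g i j) (n + k * lam1)]
      rw [Finset.sum_congr rfl (fun i _ => hgval i ⟨j, hj⟩)]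
      rw [← card_row_filter _ _ (fun i => hGb i ⟨j, hj⟩)]
      exact hGc ⟨j, hj⟩
    set a := ∑ i ∈ range n, ∑ j ∈ range n, g i j with ha
    set c1 := ∑ i ∈ range n, ∑ c ∈ range (k * lam1), g i (n + c) with hc1
    set c2 := ∑ r ∈ range (k * lam1), ∑ j ∈ range n, g (n + r) j with hc2
    set b := ∑ r ∈ range (k * lam1), ∑ c ∈ range (k * lam1), g (n + r) (n + c) with hb
    -- row / column counting relations
    have F1 : a + c1 = n * lam1 := by
      rw [ha, hc1, ← Finset.sum_add_distrib]
      rw [Finset.sum_congr rfl (fun i hi => (sum_range_split (g i) n (k * lam1)).symm)]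
      rw [Finset.sum_congr rfl (fun i hi => hgrow i (by simp only [mem_range] at hi; omega))]
      simp [mul_comm]
    have F2 : c2 + b = (k * lam1) * lam1 := by
      rw [hc2, hb, ← Finset.sum_add_distrib]
      rw [Finset.sum_congr rfl (fun r hr =>
        (sum_range_split (g (n + r)) n (k * lam1)).symm)]
      rw [Finset.sum_congr rfl (fun r hr => hgrow (n + r)
        (by simp only [mem_range] at hr; omega))]
      simp [mul_comm]
    have F3 : a + c2 = n * lam1 := by
      have h1 : ∑ j ∈ range n, ∑ i ∈ range (n + k * lam1), g i j = n * lam1 := by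
        rw [Finset.sum_congr rfl (fun j hj => hgcol j
          (by simp only [mem_range] at hj; omega))]
        simp [mul_comm]
      rw [Finset.sum_congr rfl (fun j (hj : j ∈ range n) =>
        sum_range_split (fun i => g i j) n (k * lam1))] at h1
      rw [Finset.sum_add_distrib] at h1
      rw [Finset.sum_comm (s := range n) (t := range n) (f := fun j i => g i j)] at h1
      rw [Finset.sum_comm (s := range n) (t := range (k * lam1))
        (f := fun j r => g (n + r) j)] at h1
      rw [ha, hc2]
      exact h1
    -- the key double count
    have horthsum : ∀ t : Fin k, ∑ i ∈ range (n + k * lam1),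
        ∑ j ∈ range (n + k * lam1), dkFS n lam1 k B t i j * g i j = lam1 * lam1 := by
      intro t
      have h := horth t
      rw [OrthBFS, card_pair_filter_eq _ _ _
        (fun i j => dkFS_bool n lam1 k B t i.val j.val) hGb] at h
      rw [← h, ← Fin.sum_univ_eq_sum_range (fun i => ∑ j ∈ range (n + k * lam1),
        dkFS n lam1 k B t i j * g i j) (n + k * lam1)]
      refine Finset.sum_congr rfl fun i _ => ?_
      rw [← Fin.sum_univ_eq_sum_range
        (fun j => dkFS n lam1 k B t i.val j * g i.val j) (n + k * lam1)]
      exact Finset.sum_congr rfl fun j _ => by rw [hgval i j]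
    have total : ∑ i ∈ range (n + k * lam1), ∑ j ∈ range (n + k * lam1),
        (∑ t : Fin k, dkFS n lam1 k B t i j) * g i j = k * (lam1 * lam1) := by
      have h0 : ∑ t : Fin k, (∑ i ∈ range (n + k * lam1),
          ∑ j ∈ range (n + k * lam1), dkFS n lam1 k B t i j * g i j)
          = k * (lam1 * lam1) := by
        rw [Finset.sum_congr rfl (fun t _ => horthsum t)]
        simp [mul_comm]
      rw [← h0]
      have step1 : ∀ i : ℕ, ∑ j ∈ range (n + k * lam1),
          (∑ t : Fin k, dkFS n lam1 k B t i j) * g i j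
          = ∑ t : Fin k, ∑ j ∈ range (n + k * lam1),
            dkFS n lam1 k B t i j * g i j := by
        intro i
        have e : ∀ j ∈ range (n + k * lam1),
            (∑ t : Fin k, dkFS n lam1 k B t i j) * g i j
            = ∑ t : Fin k, dkFS n lam1 k B t i j * g i j :=
          fun j _ => Finset.sum_mul _ _ _
        rw [Finset.sum_congr rfl e]
        exact Finset.sum_comm
      rw [Finset.sum_congr rfl (fun i _ => step1 i)]
      exact Finset.sum_comm
    set S := ∑ i ∈ range n, ∑ j ∈ range n,
      (if hij : i < n ∧ j < n then (B ⟨i, hij.1⟩ ⟨j, hij.2⟩).card else 0) * g i j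
      with hS
    have Key : S + b = k * (lam1 * lam1) := by
      rw [← total, sum_range_split (fun i => ∑ j ∈ range (n + k * lam1),
        (∑ t : Fin k, dkFS n lam1 k B t i j) * g i j) n (k * lam1)]
      have e1 : ∑ i ∈ range n, ∑ j ∈ range (n + k * lam1),
          (∑ t : Fin k, dkFS n lam1 k B t i j) * g i j = S := by
        rw [Finset.sum_congr rfl (fun i (hi : i ∈ range n) =>
          sum_range_split (fun j => (∑ t : Fin k, dkFS n lam1 k B t i j) * g i j)
            n (k * lam1))]
        rw [Finset.sum_add_distrib]
        have eTL : ∑ i ∈ range n, ∑ j ∈ range n,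
            (∑ t : Fin k, dkFS n lam1 k B t i j) * g i j = S := by
          rw [hS]
          refine Finset.sum_congr rfl fun i hi => Finset.sum_congr rfl fun j hj => ?_
          simp only [mem_range] at hi hj
          rw [dif_pos ⟨hi, hj⟩]
          congr 1
          exact dkFS_tsum_tl n lam1 k B ⟨i, hi⟩ ⟨j, hj⟩
        have eTR : ∑ i ∈ range n, ∑ c ∈ range (k * lam1),
            (∑ t : Fin k, dkFS n lam1 k B t i (n + c)) * g i (n + c) = 0 := by
          refine Finset.sum_eq_zero fun i hi => Finset.sum_eq_zero fun c _ => ?_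
          simp only [mem_range] at hi
          have : ∀ t : Fin k, dkFS n lam1 k B t i (n + c) = 0 := by
            intro t
            simp [dkFS, hi, show ¬ (n + c < n) by omega]
          rw [Finset.sum_congr rfl fun t _ => this t]
          simp
        rw [eTL, eTR, add_zero]
      have e2 : ∑ r ∈ range (k * lam1), ∑ j ∈ range (n + k * lam1),
          (∑ t : Fin k, dkFS n lam1 k B t (n + r) j) * g (n + r) j = b := by
        rw [Finset.sum_congr rfl (fun r (hr : r ∈ range (k * lam1)) =>
          sum_range_split (fun j => (∑ t : Fin k, dkFS n lam1 k B t (n + r) j)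
            * g (n + r) j) n (k * lam1))]
        rw [Finset.sum_add_distrib]
        have eBL : ∑ r ∈ range (k * lam1), ∑ j ∈ range n,
            (∑ t : Fin k, dkFS n lam1 k B t (n + r) j) * g (n + r) j = 0 := by
          refine Finset.sum_eq_zero fun r _ => Finset.sum_eq_zero fun j hj => ?_
          simp only [mem_range] at hj
          have : ∀ t : Fin k, dkFS n lam1 k B t (n + r) j = 0 := by
            intro t
            simp [dkFS, show ¬ (n + r < n) by omega, hj]
          rw [Finset.sum_congr rfl fun t _ => this t]
          simp
        have eBR : ∑ r ∈ range (k * lam1), ∑ c ∈ range (k * lam1),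
            (∑ t : Fin k, dkFS n lam1 k B t (n + r) (n + c)) * g (n + r) (n + c)
            = b := by
          rw [hb]
          refine Finset.sum_congr rfl fun r hr => Finset.sum_congr rfl fun c hc => ?_
          simp only [mem_range] at hr hc
          rw [dkFS_tsum_br n lam1 k B hl hk r c hr hc, one_mul]
        rw [eBL, eBR, zero_add]
      rw [e1, e2]
    -- now pass to ZMod w
    have hneg : ((w - 1 : ℕ) : ZMod w) = -1 := by
      have h1 : ((w - 1 : ℕ) : ZMod w) + 1 = 0 := by
        have hww : ((w - 1) + 1 : ℕ) = w := by omega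
        have := congrArg (fun x : ℕ => (x : ZMod w)) hww
        push_cast at this
        rw [this, ZMod.natCast_self]
      exact eq_neg_of_add_eq_zero_left h1
    have hcast : ∀ i j : Fin n, (((B i j).card : ℕ) : ZMod w) = -1 := fun i j => by
      rw [(ZMod.natCast_eq_natCast_iff _ _ _).mpr (hsize i j), hneg]
    -- w ∣ n + k * lam1
    have hkl_sum : ∑ j : Fin n, (B ⟨0, hn⟩ j).card = k * lam1 := by
      have h1 : ∀ j : Fin n, (B ⟨0, hn⟩ j).card
          = ∑ x : Fin k, if x ∈ B ⟨0, hn⟩ j then 1 else 0 := by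
        intro j
        rw [← card_filter]
        congr 1
        ext x; simp
      rw [Finset.sum_congr rfl fun j _ => h1 j, Finset.sum_comm]
      rw [Finset.sum_congr rfl (fun x (_ : x ∈ (univ : Finset (Fin k))) =>
        ((card_filter _ _).symm.trans (hrow ⟨0, hn⟩ x)))]
      simp [mul_comm]
    have hdvd1 : w ∣ n + k * lam1 := by
      have hz : ((k * lam1 : ℕ) : ZMod w) = ∑ j : Fin n, (((B ⟨0, hn⟩ j).card : ℕ) : ZMod w) := by
        rw [← Nat.cast_sum, hkl_sum]
      rw [Finset.sum_congr rfl (fun j _ => hcast ⟨0, hn⟩ j)] at hz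
      simp only [Finset.sum_const, card_univ, Fintype.card_fin, nsmul_eq_mul,
        mul_neg, mul_one] at hz
      rw [← ZMod.natCast_eq_zero_iff]
      push_cast
      push_cast at hz
      rw [hz]
      ring
    -- w ∣ n * lam1
    have hSz : (S : ZMod w) = -(a : ZMod w) := by
      rw [hS, ha]
      push_cast
      rw [← Finset.sum_neg_distrib]
      refine Finset.sum_congr rfl fun i hi => ?_
      rw [← Finset.sum_neg_distrib]
      refine Finset.sum_congr rfl fun j hj => ?_
      simp only [mem_range] at hi hj
      rw [dif_pos ⟨hi, hj⟩]
      push_cast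
      rw [hcast ⟨i, hi⟩ ⟨j, hj⟩]
      ring
    have hdvd2 : w ∣ n * lam1 := by
      have kz : (S : ZMod w) + (b : ZMod w)
          = (k : ZMod w) * ((lam1 : ZMod w) * (lam1 : ZMod w)) := by
        have := congrArg (fun x : ℕ => (x : ZMod w)) Key
        push_cast at this
        exact this
      have f2z : (c2 : ZMod w) + (b : ZMod w)
          = (k : ZMod w) * ((lam1 : ZMod w) * (lam1 : ZMod w)) := by
        have := congrArg (fun x : ℕ => (x : ZMod w)) F2
        push_cast at this
        rw [this]
        ring
      have f3z : (a : ZMod w) + (c2 : ZMod w) = (n : ZMod w) * (lam1 : ZMod w) := by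
        have := congrArg (fun x : ℕ => (x : ZMod w)) F3
        push_cast at this
        exact this
      rw [hSz] at kz
      rw [← ZMod.natCast_eq_zero_iff]
      push_cast
      linear_combination f2z - kz - f3z
    -- reduce both coprimality options to gcd lam1 w = 1
    have hcl : Nat.Coprime lam1 w := by
      rcases hcop with h | h
      · exact h
      · have hkl : (k - 1) * lam1 + lam1 = k * lam1 := by
          have h1 : k - 1 + 1 = k := by omega
          calc (k - 1) * lam1 + lam1 = ((k - 1) + 1) * lam1 := by ring
            _ = k * lam1 := by rw [h1]
        have hd1 : Nat.gcd lam1 w ∣ lam1 := Nat.gcd_dvd_left _ _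
        have hd2 : Nat.gcd lam1 w ∣ w := Nat.gcd_dvd_right _ _
        have hd3 : Nat.gcd lam1 w ∣ n + k * lam1 := hd2.trans hdvd1
        have hd4 : Nat.gcd lam1 w ∣ n + (k - 1) * lam1 := by
          have := Nat.dvd_sub hd3 hd1
          have heq : n + k * lam1 - lam1 = n + (k - 1) * lam1 := by omega
          rwa [heq] at this
        have : Nat.gcd lam1 w ∣ Nat.gcd (n + (k - 1) * lam1) w :=
          Nat.dvd_gcd hd4 hd2
        rw [Nat.coprime_iff_gcd_eq_one] at h
        rw [h] at this
        rw [Nat.coprime_iff_gcd_eq_one]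
        exact Nat.dvd_one.mp this
    exact hnw (Nat.Coprime.dvd_of_dvd_mul_right hcl.symm hdvd2)
end

section
/- For every positive integer q not divisible by 3, there exists a type-maximal set of 8 mutually orthogonal binary frequency squares of type (45q;41q,4q); that is, 8 pairwise orthogonal binary frequency squares of order 45q, each with exactly 4q ones per row and column, such that no binary frequency square of type (45q;41q,4q) is orthogonal to all 8 of them. -/
open Finset

/-- Bitmask row data of the eight base squares of order 45 (bit `j` of entry `i` of list `t`
is the `(i,j)` entry of square `t`). -/
def table : List (List Nat) := [
  [5089536245760, 17622250815488, 26474178412544, 9122510536704, 20959440404480, 11407433138176, 996432412672, 2787433775104, 5510443040768, 5025111736320, 30855045054464, 1417339207680, 3453153705984, 15, 30, 60, 120, 240, 480, 960, 1920, 3840, 7680, 15360, 30720, 61440, 122880, 245760, 491520, 983040, 1966080, 3932160, 7864320, 15728640, 31457280, 62914560, 125829120, 251658240, 503316480, 1006632960, 2013265920, 4026531840, 3758096385, 3221225475, 2147483655],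
  [2229088026624, 7155415515136, 5523327942656, 8972186681344, 1211180777472, 18554258718720, 19275813224448, 10050223472640, 7421703487488, 20070382174208, 9156870275072, 26491358281728, 4608499908608, 240, 480, 960, 1920, 3840, 7680, 15360, 30720, 61440, 122880, 245760, 491520, 983040, 1966080, 3932160, 7864320, 15728640, 31457280, 62914560, 125829120, 251658240, 503316480, 1006632960, 2013265920, 4026531840, 3758096385, 3221225475, 2147483655, 15, 30, 60, 120],
  [10174777524224, 3444563771392, 17781164605440, 1700807049216, 13280038879232, 356482285568, 20134806683648, 4990751997952, 2254857830400, 2890512990208, 14431090114560, 26946624815104, 22333829939200, 3840, 7680, 15360, 30720, 61440, 122880, 245760, 491520, 983040, 1966080, 3932160, 7864320, 15728640, 31457280, 62914560, 125829120, 251658240, 503316480, 1006632960, 2013265920, 4026531840, 3758096385, 3221225475, 2147483655, 15, 30, 60, 120, 240, 480, 960, 1920],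
  [1275605286912, 26465588477952, 167503724544, 18245021073408, 2821793513472, 15427522527232, 5231270166528, 18983755448320, 3917010173952, 6648609374208, 1520418422784, 30790620545024, 9225589751808, 61440, 122880, 245760, 491520, 983040, 1966080, 3932160, 7864320, 15728640, 31457280, 62914560, 125829120, 251658240, 503316480, 1006632960, 2013265920, 4026531840, 3758096385, 3221225475, 2147483655, 15, 30, 60, 120, 240, 480, 960, 1920, 3840, 7680, 15360, 30720],
  [24193550778368, 197568495616, 1395864371200, 4509715660800, 26731876450304, 1262720385024, 3161095929856, 10514079940608, 1451698946048, 28604482191360, 6635724472320, 13881334300672, 18180596563968, 983040, 1966080, 3932160, 7864320, 15728640, 31457280, 62914560, 125829120, 251658240, 503316480, 1006632960, 2013265920, 4026531840, 3758096385, 3221225475, 2147483655, 15, 30, 60, 120, 240, 480, 960, 1920, 3840, 7680, 15360, 30720, 61440, 122880, 245760, 491520],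
  [26667451940864, 13271448944640, 670014898176, 2516850835456, 395136991232, 5257039970304, 9917079486464, 19378892439552, 18846316494848, 7705171329024, 13748190314496, 2409476653056, 19937238188032, 15728640, 31457280, 62914560, 125829120, 251658240, 503316480, 1006632960, 2013265920, 4026531840, 3758096385, 3221225475, 2147483655, 15, 30, 60, 120, 240, 480, 960, 1920, 3840, 7680, 15360, 30720, 61440, 122880, 245760, 491520, 983040, 1966080, 3932160, 7864320],
  [631360192512, 1417339207680, 15410342658048, 6635724472320, 760209211392, 1529008357376, 9418863280128, 5291399708672, 28621662060544, 5669356830720, 19816979103744, 26680336842752, 18837726560256, 251658240, 503316480, 1006632960, 2013265920, 4026531840, 3758096385, 3221225475, 2147483655, 15, 30, 60, 120, 240, 480, 960, 1920, 3840, 7680, 15360, 30720, 61440, 122880, 245760, 491520, 983040, 1966080, 3932160, 7864320, 15728640, 31457280, 62914560, 125829120],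
  [124554051584, 837518622720, 3040836845568, 18863496364032, 4612794875904, 17802639441920, 4698694221824, 3311419785216, 12232066859008, 13537736916992, 13778255085568, 20907900796928, 26972394618880, 4026531840, 3758096385, 3221225475, 2147483655, 15, 30, 60, 120, 240, 480, 960, 1920, 3840, 7680, 15360, 30720, 61440, 122880, 245760, 491520, 983040, 1966080, 3932160, 7864320, 15728640, 31457280, 62914560, 125829120, 251658240, 503316480, 1006632960, 2013265920]
]

/-- The eight base binary frequency squares of type `(45; 41, 4)`. -/
def baseF (t : Fin 8) (i j : Fin 45) : ℕ :=
  ((table.getD t.val []).getD i.val 0) / 2 ^ j.val % 2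

def bmu (i : Fin 45) : ℕ := if i.val < 13 then 0 else 1
def bnu (j : Fin 45) : ℕ := if j.val < 32 then 0 else 2

lemma baseF01 (t : Fin 8) (i j : Fin 45) : baseF t i j = 0 ∨ baseF t i j = 1 :=
  Nat.mod_two_eq_zero_or_one _

lemma baseRow : ∀ (t : Fin 8) (i : Fin 45), (∑ j, baseF t i j) = 4 := by decide

lemma baseCol : ∀ (t : Fin 8) (j : Fin 45), (∑ i, baseF t i j) = 4 := by decide

lemma baseMod : ∀ (i j : Fin 45), (∑ t, baseF t i j) % 3 = (bmu i + bnu j) % 3 := by decide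

lemma muSum : (∑ i, bmu i) = 32 := by decide

lemma nuSum : (∑ j, bnu j) = 26 := by decide

set_option maxHeartbeats 4000000 in
lemma baseOrth : ∀ s t : Fin 8, s ≠ t →
    (∑ i, ∑ j, baseF s i j * baseF t i j) = 16 := by decide


def bidx {q : ℕ} (i : Fin (45 * q)) : Fin 45 := ⟨i.val % 45, Nat.mod_lt _ (by norm_num)⟩

def emb (q : ℕ) : Fin q × Fin 45 ≃ Fin (45 * q) :=
  finProdFinEquiv.trans (finCongr (Nat.mul_comm q 45))

lemma bidx_emb {q : ℕ} (p : Fin q × Fin 45) : bidx (emb q p) = p.2 := by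
  have hval : (emb q p).val = p.2.val + 45 * p.1.val := by
    simp [emb, finProdFinEquiv]
  apply Fin.ext
  show (emb q p).val % 45 = p.2.val
  rw [hval, Nat.add_mul_mod_self_left, Nat.mod_eq_of_lt p.2.isLt]

lemma sum_bidx {q : ℕ} (g : Fin 45 → ℕ) :
    ∑ i : Fin (45 * q), g (bidx i) = q * ∑ a : Fin 45, g a := by
  rw [← Equiv.sum_comp (emb q) (fun i => g (bidx i))]
  calc ∑ p : Fin q × Fin 45, g (bidx (emb q p))
      = ∑ p : Fin q × Fin 45, g p.2 := by
        refine Finset.sum_congr rfl fun p _ => by rw [bidx_emb]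
    _ = ∑ _a : Fin q, ∑ b : Fin 45, g b := by rw [Fintype.sum_prod_type]
    _ = q * ∑ a : Fin 45, g a := by
        rw [Finset.sum_const, card_univ, Fintype.card_fin, smul_eq_mul]

lemma sum_bidx2 {q : ℕ} (h : Fin 45 → Fin 45 → ℕ) :
    ∑ i : Fin (45 * q), ∑ j : Fin (45 * q), h (bidx i) (bidx j)
      = q * (q * ∑ a : Fin 45, ∑ b : Fin 45, h a b) := by
  have step1 : ∀ i : Fin (45 * q), ∑ j : Fin (45 * q), h (bidx i) (bidx j)
      = q * ∑ b : Fin 45, h (bidx i) b := fun i => sum_bidx (g := fun b => h (bidx i) b)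
  calc ∑ i : Fin (45 * q), ∑ j : Fin (45 * q), h (bidx i) (bidx j)
      = ∑ i : Fin (45 * q), q * ∑ b : Fin 45, h (bidx i) b := by
        exact Finset.sum_congr rfl fun i _ => step1 i
    _ = q * ∑ a : Fin 45, (q * ∑ b : Fin 45, h a b) :=
        sum_bidx (g := fun a => q * ∑ b : Fin 45, h a b)
    _ = q * (q * ∑ a : Fin 45, ∑ b : Fin 45, h a b) := by rw [← Finset.mul_sum]

lemma card_filter_eq_sum {n : ℕ} (f : Fin n → ℕ) (hf : ∀ x, f x = 0 ∨ f x = 1) :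
    (univ.filter (fun j => f j = 1)).card = ∑ j, f j := by
  rw [Finset.card_filter]
  refine Finset.sum_congr rfl fun x _ => ?_
  rcases hf x with h | h <;> simp [h]

lemma card_filter_pair {ι : Type*} [Fintype ι] (f g : ι → ℕ)
    (hf : ∀ x, f x = 0 ∨ f x = 1) (hg : ∀ x, g x = 0 ∨ g x = 1) :
    (univ.filter (fun p => f p = 1 ∧ g p = 1)).card = ∑ p, f p * g p := by
  rw [Finset.card_filter]
  refine Finset.sum_congr rfl fun x _ => ?_
  rcases hf x with h | h <;> rcases hg x with h' | h' <;> simp [h, h']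

/-- For every positive integer `q` not divisible by 3, there exists a type-maximal set
of 8 mutually orthogonal binary frequency squares of type `(45q; 41q, 4q)`. -/
theorem stmt14 (q : ℕ) (hq : 0 < q) (h3 : ¬ 3 ∣ q) :
    ∃ F : Fin 8 → Fin (45 * q) → Fin (45 * q) → ℕ,
      (∀ t, IsBFS (45 * q) (4 * q) (F t)) ∧
      (∀ s t, s ≠ t → OrthBFS (45 * q) (4 * q) (4 * q) (F s) (F t)) ∧
      ¬ ∃ G : Fin (45 * q) → Fin (45 * q) → ℕ,
        IsBFS (45 * q) (4 * q) G ∧ ∀ t, OrthBFS (45 * q) (4 * q) (4 * q) (F t) G := by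
  classical
  refine ⟨fun t i j => baseF t (bidx i) (bidx j), fun t => ?_, fun s t hst => ?_, ?_⟩
  · -- each square is a BFS
    refine ⟨fun i j => baseF01 _ _ _, fun i => ?_, fun j => ?_⟩
    · rw [card_filter_eq_sum _ (fun x => baseF01 _ _ _),
        sum_bidx (g := fun b => baseF t (bidx i) b), baseRow]
      ring
    · rw [card_filter_eq_sum _ (fun x => baseF01 _ _ _),
        sum_bidx (g := fun a => baseF t a (bidx j)), baseCol]
      ring
  · -- pairwise orthogonality
    show (univ.filter _).card = 4 * q * (4 * q)
    rw [card_filter_pair (fun p : Fin (45 * q) × Fin (45 * q) => baseF s (bidx p.1) (bidx p.2))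
        (fun p => baseF t (bidx p.1) (bidx p.2))
        (fun p => baseF01 _ _ _) (fun p => baseF01 _ _ _),
      Fintype.sum_prod_type,
      sum_bidx2 (h := fun a b => baseF s a b * baseF t a b),
      baseOrth s t hst]
    ring
  · -- maximality
    rintro ⟨G, ⟨hG01, hGrow, hGcol⟩, horth⟩
    have hrow : ∀ i, (∑ j, G i j) = 4 * q := fun i => by
      rw [← card_filter_eq_sum _ (hG01 i)]; exact hGrow i
    have hcol : ∀ j, (∑ i, G i j) = 4 * q := fun j => by
      rw [← card_filter_eq_sum (fun i => G i j) (fun i => hG01 i j)]; exact hGcol j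
    have key : ∑ p : Fin (45 * q) × Fin (45 * q),
        (∑ t : Fin 8, baseF t (bidx p.1) (bidx p.2)) * G p.1 p.2
        = 8 * (4 * q * (4 * q)) := by
      calc ∑ p : Fin (45 * q) × Fin (45 * q),
            (∑ t : Fin 8, baseF t (bidx p.1) (bidx p.2)) * G p.1 p.2
          = ∑ p : Fin (45 * q) × Fin (45 * q),
            ∑ t : Fin 8, baseF t (bidx p.1) (bidx p.2) * G p.1 p.2 := by
            refine Finset.sum_congr rfl fun p _ => Finset.sum_mul _ _ _
        _ = ∑ t : Fin 8, ∑ p : Fin (45 * q) × Fin (45 * q),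
            baseF t (bidx p.1) (bidx p.2) * G p.1 p.2 := Finset.sum_comm
        _ = ∑ _t : Fin 8, (4 * q * (4 * q)) := by
            refine Finset.sum_congr rfl fun t _ => ?_
            rw [← card_filter_pair (fun p : Fin (45 * q) × Fin (45 * q) =>
                baseF t (bidx p.1) (bidx p.2)) (fun p => G p.1 p.2)
                (fun p => baseF01 _ _ _) (fun p => hG01 p.1 p.2)]
            exact horth t
        _ = 8 * (4 * q * (4 * q)) := by
            rw [Finset.sum_const, card_univ, Fintype.card_fin, smul_eq_mul]
    have hM3 : ∀ a b : Fin 45, ((∑ t : Fin 8, baseF t a b : ℕ) : ZMod 3)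
        = ((bmu a + bnu b : ℕ) : ZMod 3) :=
      fun a b => (ZMod.natCast_eq_natCast_iff' _ _ _).mpr (baseMod a b)
    have key2 : ((8 * (4 * q * (4 * q)) : ℕ) : ZMod 3)
        = ((q * 32 * (4 * q) + q * 26 * (4 * q) : ℕ) : ZMod 3) := by
      rw [← key]
      push_cast
      calc ∑ p : Fin (45 * q) × Fin (45 * q),
            (∑ t : Fin 8, (baseF t (bidx p.1) (bidx p.2) : ZMod 3)) * (G p.1 p.2 : ZMod 3)
          = ∑ p : Fin (45 * q) × Fin (45 * q),
            ((bmu (bidx p.1) : ZMod 3) + (bnu (bidx p.2) : ZMod 3)) * (G p.1 p.2 : ZMod 3) := by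
            refine Finset.sum_congr rfl fun p _ => ?_
            have h := hM3 (bidx p.1) (bidx p.2)
            push_cast at h
            rw [h]
        _ = (∑ i : Fin (45 * q), ∑ j : Fin (45 * q),
              (bmu (bidx i) : ZMod 3) * (G i j : ZMod 3))
            + ∑ i : Fin (45 * q), ∑ j : Fin (45 * q),
              (bnu (bidx j) : ZMod 3) * (G i j : ZMod 3) := by
            rw [Fintype.sum_prod_type, ← Finset.sum_add_distrib]
            refine Finset.sum_congr rfl fun i _ => ?_
            rw [← Finset.sum_add_distrib]
            exact Finset.sum_congr rfl fun j _ => add_mul _ _ _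
        _ = ((q * 32 : ℕ) : ZMod 3) * ((4 * q : ℕ) : ZMod 3)
            + ((q * 26 : ℕ) : ZMod 3) * ((4 * q : ℕ) : ZMod 3) := by
            congr 1
            · calc ∑ i : Fin (45 * q), ∑ j : Fin (45 * q),
                  (bmu (bidx i) : ZMod 3) * (G i j : ZMod 3)
                  = ∑ i : Fin (45 * q), (bmu (bidx i) : ZMod 3) * ((4 * q : ℕ) : ZMod 3) := by
                    refine Finset.sum_congr rfl fun i _ => ?_
                    rw [← Finset.mul_sum]
                    congr 1
                    rw [← Nat.cast_sum, hrow i]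
                _ = (∑ i : Fin (45 * q), (bmu (bidx i) : ZMod 3)) * ((4 * q : ℕ) : ZMod 3) := by
                    rw [Finset.sum_mul]
                _ = ((q * 32 : ℕ) : ZMod 3) * ((4 * q : ℕ) : ZMod 3) := by
                    congr 1
                    rw [← Nat.cast_sum, sum_bidx (g := fun a => bmu a), muSum]
            · calc ∑ i : Fin (45 * q), ∑ j : Fin (45 * q),
                  (bnu (bidx j) : ZMod 3) * (G i j : ZMod 3)
                  = ∑ j : Fin (45 * q), ∑ i : Fin (45 * q),
                    (bnu (bidx j) : ZMod 3) * (G i j : ZMod 3) := Finset.sum_comm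
                _ = ∑ j : Fin (45 * q), (bnu (bidx j) : ZMod 3) * ((4 * q : ℕ) : ZMod 3) := by
                    refine Finset.sum_congr rfl fun j _ => ?_
                    rw [← Finset.mul_sum]
                    congr 1
                    rw [← Nat.cast_sum, hcol j]
                _ = (∑ j : Fin (45 * q), (bnu (bidx j) : ZMod 3)) * ((4 * q : ℕ) : ZMod 3) := by
                    rw [Finset.sum_mul]
                _ = ((q * 26 : ℕ) : ZMod 3) * ((4 * q : ℕ) : ZMod 3) := by
                    congr 1
                    rw [← Nat.cast_sum, sum_bidx (g := fun a => bnu a), nuSum]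
        _ = ((q : ZMod 3) * 32 * (4 * (q : ZMod 3)) + (q : ZMod 3) * 26 * (4 * (q : ZMod 3))) := by
            push_cast; ring
    rw [ZMod.natCast_eq_natCast_iff'] at key2
    have h1 : 8 * (4 * q * (4 * q)) = 128 * (q * q) := by ring
    have h2 : q * 32 * (4 * q) + q * 26 * (4 * q) = 232 * (q * q) := by ring
    rw [h1, h2, Nat.mul_mod 128, Nat.mul_mod 232] at key2
    have hm : q * q % 3 = 1 := by
      rw [Nat.mul_mod]
      have hq3 : q % 3 = 1 ∨ q % 3 = 2 := by omega
      rcases hq3 with h | h <;> rw [h]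
    omega
end

section
/- Let (b_1,…,b_B) be a family of B subsets (blocks) of a point set {1,…,V} such that every point occurs in exactly R blocks, every pair of distinct points occurs in exactly Λ blocks, and R² = Λ·B. Let I be the V×B incidence matrix (I(x,j) = 1 iff point x ∈ b_j). For each point x, let F_x be the B×B (0,1)-matrix whose first row is row x of I and whose each subsequent row is the cyclic shift of the previous row one place to the right. Then {F_1,…,F_V} is a set of V mutually orthogonal binary frequency squares of type (B;B−R,R). -/
open Finset

lemma row_shift_card {B : ℕ} (i : Fin B) (Q : Fin B → Prop) [DecidablePred Q] :
    (univ.filter (fun j => Q (j - i))).card = (univ.filter Q).card := by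
  haveI : NeZero B := ⟨i.pos.ne'⟩
  apply Finset.card_bij' (fun j _ => j - i) (fun k _ => k + i) <;>
    intro a ha <;> simp_all [sub_add_cancel, add_sub_cancel_right]

lemma col_shift_card {B : ℕ} (j : Fin B) (Q : Fin B → Prop) [DecidablePred Q] :
    (univ.filter (fun i => Q (j - i))).card = (univ.filter Q).card := by
  haveI : NeZero B := ⟨j.pos.ne'⟩
  apply Finset.card_bij' (fun i _ => j - i) (fun k _ => j - k) <;>
    intro a ha <;> simp_all [sub_sub_cancel]

lemma prod_shift_card {B : ℕ} (Q : Fin B → Prop) [DecidablePred Q] :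
    ((univ : Finset (Fin B × Fin B)).filter (fun p => Q (p.2 - p.1))).card
      = B * (univ.filter Q).card := by
  have h : ((univ : Finset (Fin B × Fin B)).filter (fun p => Q (p.2 - p.1))).card
      = ((univ : Finset (Fin B × Fin B)).filter (fun p => Q p.2)).card := by
    apply Finset.card_bij' (fun p _ => (p.1, p.2 - p.1)) (fun p _ => (p.1, p.2 + p.1)) <;>
      intro a ha <;> haveI : NeZero B := ⟨a.1.pos.ne'⟩ <;>
        simp_all [sub_add_cancel, add_sub_cancel_right, Prod.ext_iff]
  rw [h]
  have h2 : ((univ : Finset (Fin B × Fin B)).filter (fun p => Q p.2))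
      = (univ : Finset (Fin B)) ×ˢ (univ.filter Q) := by
    ext p; simp [Finset.mem_product]
  rw [h2, Finset.card_product, Finset.card_univ, Fintype.card_fin]

/-- From a Doehlert–Klee design (`V` points, `B` blocks, every point in exactly `R`
blocks, every pair of distinct points in exactly `L` blocks, `R² = L·B`), the `B × B`
matrices `F x` whose first row is row `x` of the incidence matrix and whose each
subsequent row is the cyclic shift of the previous row one place to the right (so
`F x i j = 1 ↔ x ∈ b (j - i)`) form a set of `V` mutually orthogonal binary frequency
squares of type `(B; B - R, R)`. -/
theorem stmt16 (V B R L : ℕ) (b : Fin B → Finset (Fin V))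
    (hR : ∀ x : Fin V, (univ.filter (fun j : Fin B => x ∈ b j)).card = R)
    (hL : ∀ x y : Fin V, x ≠ y →
      (univ.filter (fun j : Fin B => x ∈ b j ∧ y ∈ b j)).card = L)
    (hDK : R ^ 2 = L * B) :
    (∀ x : Fin V, IsBFS B R (fun i j => if x ∈ b (j - i) then 1 else 0)) ∧
    (∀ x y : Fin V, x ≠ y →
      OrthBFS B R R (fun i j => if x ∈ b (j - i) then 1 else 0)
        (fun i j => if y ∈ b (j - i) then 1 else 0)) := by
  constructor
  · intro x
    refine ⟨fun i j => by by_cases h : x ∈ b (j - i) <;> simp [h], ?_, ?_⟩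
    · intro i
      have : (univ.filter (fun j : Fin B =>
          (if x ∈ b (j - i) then (1:ℕ) else 0) = 1))
          = univ.filter (fun j : Fin B => x ∈ b (j - i)) := by
        ext j; by_cases h : x ∈ b (j - i) <;> simp [h]
      rw [this, row_shift_card i (fun k => x ∈ b k), hR]
    · intro j
      have : (univ.filter (fun i : Fin B =>
          (if x ∈ b (j - i) then (1:ℕ) else 0) = 1))
          = univ.filter (fun i : Fin B => x ∈ b (j - i)) := by
        ext i; by_cases h : x ∈ b (j - i) <;> simp [h]
      rw [this, col_shift_card j (fun k => x ∈ b k), hR]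
  · intro x y hxy
    unfold OrthBFS
    have : ((univ : Finset (Fin B × Fin B)).filter
        (fun p => (if x ∈ b (p.2 - p.1) then (1:ℕ) else 0) = 1 ∧
          (if y ∈ b (p.2 - p.1) then (1:ℕ) else 0) = 1))
        = (univ : Finset (Fin B × Fin B)).filter
          (fun p => x ∈ b (p.2 - p.1) ∧ y ∈ b (p.2 - p.1)) := by
      ext p
      by_cases h1 : x ∈ b (p.2 - p.1) <;> by_cases h2 : y ∈ b (p.2 - p.1) <;> simp [h1, h2]
    rw [this, prod_shift_card (fun k => x ∈ b k ∧ y ∈ b k), hL x y hxy, mul_comm,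
      ← hDK, sq]
end

section
/- Let w and x be nonnegative integers with w positive. Suppose there exists a family of B subsets (blocks) of a point set {1,…,V} such that every point occurs in exactly R blocks, every pair of distinct points occurs in exactly Λ blocks, R² = Λ·B, and every block has cardinality congruent to x modulo w. Then there exists a set of V mutually orthogonal binary frequency squares of type (B+VR; B+VR−R, R) whose entrywise integer sum is congruent, modulo w, to the block matrix of order B+VR with x·J_B in the top-left B×B corner, the all-ones matrix J_{VR} in the bottom-right VR×VR corner, and zeros elsewhere. -/
/-! The square of a point `t` is block diagonal. Its `B × B` block has a `1` at `(i, j)` exactly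
when `t` lies in block `i + j` (indices mod `B`), so its lines contain `R` ones because `t` lies
in `R` blocks; its `VR × VR` block is the permutation matrix of `c ↦ c + t` on `ℤ/V` with every
entry blown up to `J_R`. Squares of distinct points `s, t` share ones only in the top block, in
`B · L = R²` cells. At a cell `(i, j)` of the top block the squares with a `1` are those of the
points of block `i + j`, giving `|b (i + j)| ≡ x`; at a cell of the bottom block exactly one square
has a `1`. -/

open Finset

open Function

theorem card_filter_comp_bijective {α β : Type*} [Fintype α] [Fintype β] {f : α → β}
    (hf : Bijective f) (P : β → Prop) [DecidablePred P] : #{x | P (f x)} = #{y | P y} := by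
  simp only [card_filter]
  exact hf.sum_comp fun y => if P y then 1 else 0

theorem card_filter_sum_type {α β : Type*} [Fintype α] [Fintype β] (P : α ⊕ β → Prop)
    [DecidablePred P] :
    #{x | P x} = #{a | P (Sum.inl a)} + #{b | P (Sum.inr b)} := by
  simp only [card_filter, Fintype.sum_sum_type]

section LatinSquare

variable {α β γ : Type*}

def IsLatinSquare (σ : α → β → γ) : Prop :=
  (∀ a, Bijective (σ a)) ∧ ∀ b, Bijective (σ · b)

theorem Fin.isLatinSquare_add (n : ℕ) : IsLatinSquare fun a b : Fin n => a + b :=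
  ⟨fun a => Finite.injective_iff_bijective.1 (add_right_injective a),
    fun b => Finite.injective_iff_bijective.1 (add_left_injective b)⟩

end LatinSquare

section FrequencyRelation

variable {ι κ : Type*} [Fintype ι] [Fintype κ]

/-- A binary frequency square with `r` ones per line, recorded by its support. -/
def IsFreqRel (r : ℕ) (S : ι → ι → Prop) [DecidableRel S] : Prop :=
  (∀ i, #{j | S i j} = r) ∧ ∀ j, #{i | S i j} = r

def overlap (S T : ι → ι → Prop) [DecidableRel S] [DecidableRel T] : ℕ :=
  #{p : ι × ι | S p.1 p.2 ∧ T p.1 p.2}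

theorem IsFreqRel.liftRel {r : ℕ} {S : ι → ι → Prop} {T : κ → κ → Prop} [DecidableRel S]
    [DecidableRel T] (hS : IsFreqRel r S) (hT : IsFreqRel r T) : IsFreqRel r (Sum.LiftRel S T) := by
  refine ⟨?_, ?_⟩ <;> rintro (i | i) <;> simp [card_filter_sum_type, hS.1, hS.2, hT.1, hT.2]

theorem overlap_liftRel (S S' : ι → ι → Prop) (T T' : κ → κ → Prop) [DecidableRel S]
    [DecidableRel S'] [DecidableRel T] [DecidableRel T'] :
    overlap (Sum.LiftRel S T) (Sum.LiftRel S' T') = overlap S S' + overlap T T' := by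
  simp only [overlap, card_filter, Fintype.sum_prod_type, Fintype.sum_sum_type]
  simp

theorem isBFS_ite {n r : ℕ} (e : Fin n ≃ ι) {S : ι → ι → Prop} [DecidableRel S]
    (hS : IsFreqRel r S) :
    IsBFS n r fun i j => if S (e i) (e j) then 1 else 0 := by
  refine ⟨fun i j => by dsimp only; split_ifs <;> simp, fun i => ?_, fun j => ?_⟩
  · simpa using (card_filter_comp_bijective e.bijective (S (e i))).trans (hS.1 (e i))
  · simpa using (card_filter_comp_bijective e.bijective (S · (e j))).trans (hS.2 (e j))

theorem orthBFS_ite {n r r' : ℕ} (e : Fin n ≃ ι) {S T : ι → ι → Prop}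
    [DecidableRel S] [DecidableRel T] (h : overlap S T = r * r') :
    OrthBFS n r r' (fun i j => if S (e i) (e j) then 1 else 0)
      (fun i j => if T (e i) (e j) then 1 else 0) := by
  rw [OrthBFS, ← h, overlap, ← card_filter_comp_bijective (e.prodCongr e).bijective]
  simp

end FrequencyRelation

section Design

variable {α β κ γ P : Type*} [Fintype α] [Fintype β] [DecidableEq P]

abbrev designRel (σ : α → α → β) (b : β → Finset P) (p : P) (i j : α) : Prop :=
  p ∈ b (σ i j)

theorem isFreqRel_designRel {σ : α → α → β} (hσ : IsLatinSquare σ) (b : β → Finset P) {p : P}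
    {R : ℕ} (hR : #{k | p ∈ b k} = R) : IsFreqRel R (designRel σ b p) :=
  ⟨fun i => (card_filter_comp_bijective (hσ.1 i) (p ∈ b ·)).trans hR,
    fun j => (card_filter_comp_bijective (hσ.2 j) (p ∈ b ·)).trans hR⟩

theorem overlap_designRel {σ : α → α → β} (hσ : ∀ i, Bijective (σ i)) (b : β → Finset P)
    (p q : P) :
    overlap (designRel σ b p) (designRel σ b q) = Fintype.card α * #{k | p ∈ b k ∧ q ∈ b k} := by
  simp only [overlap, designRel, card_filter, Fintype.sum_prod_type]
  rw [sum_congr rfl fun i _ => (hσ i).sum_comp fun k => if p ∈ b k ∧ q ∈ b k then 1 else 0]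
  simp

variable [DecidableEq β]

/-- The permutation matrix of `c ↦ τ c t` on `β`, with every entry blown up to a `γ × γ` block. -/
abbrev shiftRel (τ : β → κ → β) (t : κ) (p q : β × γ) : Prop :=
  q.1 = τ p.1 t

theorem isFreqRel_shiftRel [Fintype γ] {τ : β → κ → β} (hτ : ∀ t, Bijective (τ · t)) (t : κ) :
    IsFreqRel (Fintype.card γ) (shiftRel (γ := γ) τ t) := by
  refine ⟨fun p => ?_, fun q => ?_⟩
  · rw [card_filter, Fintype.sum_prod_type]
    simp [shiftRel, apply_ite]
  · simp only [shiftRel, card_filter, Fintype.sum_prod_type]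
    rw [(hτ t).sum_comp fun d => ∑ _ : γ, if q.1 = d then 1 else 0]
    simp

theorem overlap_shiftRel [Fintype γ] {τ : β → κ → β} (hτ : ∀ c, Injective (τ c)) {s t : κ}
    (hst : s ≠ t) :
    overlap (shiftRel (γ := γ) τ s) (shiftRel τ t) = 0 := by
  rw [overlap, card_eq_zero, filter_eq_empty_iff]
  rintro ⟨p, q⟩ - ⟨hs, ht⟩
  exact hst (hτ p.1 (hs.symm.trans ht))

theorem card_shiftRel [Fintype κ] {τ : β → κ → β} (hτ : ∀ c, Bijective (τ c)) (p q : β × γ) :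
    #{t | shiftRel τ t p q} = 1 := by
  rw [card_filter_comp_bijective (hτ p.1) (q.1 = ·), filter_eq]
  simp

end Design

theorem modEq_ite_of_addCases {m n w x : ℕ} (f : Fin (m + n) → Fin (m + n) → ℕ)
    (hll : ∀ a a', f (Fin.castAdd n a) (Fin.castAdd n a') ≡ x [MOD w])
    (hrr : ∀ c c', f (Fin.natAdd m c) (Fin.natAdd m c') ≡ 1 [MOD w])
    (hlr : ∀ a c, f (Fin.castAdd n a) (Fin.natAdd m c) = 0)
    (hrl : ∀ c a, f (Fin.natAdd m c) (Fin.castAdd n a) = 0) (i j : Fin (m + n)) :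
    f i j ≡ (if (i : ℕ) < m ∧ (j : ℕ) < m then x
      else if m ≤ (i : ℕ) ∧ m ≤ (j : ℕ) then 1 else 0) [MOD w] := by
  induction i using Fin.addCases <;> induction j using Fin.addCases <;>
    simp [*, Nat.not_le_of_lt (Fin.is_lt _), Nat.ModEq.refl]

theorem stmt17_general (w x V B R L : ℕ) (b : Fin B → Finset (Fin V))
    (hR : ∀ p : Fin V, (univ.filter (fun j : Fin B => p ∈ b j)).card = R)
    (hL : ∀ p q : Fin V, p ≠ q →
      (univ.filter (fun j : Fin B => p ∈ b j ∧ q ∈ b j)).card = L)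
    (hDK : R ^ 2 = L * B)
    (hsize : ∀ j : Fin B, (b j).card ≡ x [MOD w]) :
    ∃ F : Fin V → Fin (B + V * R) → Fin (B + V * R) → ℕ,
      (∀ t, IsBFS (B + V * R) R (F t)) ∧
      (∀ s t, s ≠ t → OrthBFS (B + V * R) R R (F s) (F t)) ∧
      (∀ i j : Fin (B + V * R),
        (∑ t, F t i j) ≡
          (if (i : ℕ) < B ∧ (j : ℕ) < B then x
           else if B ≤ (i : ℕ) ∧ B ≤ (j : ℕ) then 1 else 0) [MOD w]) := by
  have hlatinB := Fin.isLatinSquare_add B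
  have hlatinV := Fin.isLatinSquare_add V
  let e : Fin (B + V * R) ≃ Fin B ⊕ Fin V × Fin R :=
    finSumFinEquiv.symm.trans (Equiv.sumCongr (Equiv.refl _) finProdFinEquiv.symm)
  let S (t : Fin V) : Fin B ⊕ Fin V × Fin R → Fin B ⊕ Fin V × Fin R → Prop :=
    Sum.LiftRel (designRel (· + ·) b t) (shiftRel (· + ·) t)
  refine ⟨fun t i j => if S t (e i) (e j) then 1 else 0, fun t => isBFS_ite e ?_,
    fun s t hst => orthBFS_ite e ?_, fun i j => ?_⟩
  · exact (isFreqRel_designRel hlatinB b (hR t)).liftRel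
      (by simpa using isFreqRel_shiftRel (γ := Fin R) hlatinV.2 t)
  · rw [overlap_liftRel, overlap_designRel hlatinB.1,
      overlap_shiftRel (fun c => (hlatinV.1 c).1) hst, hL s t hst, Fintype.card_fin, add_zero,
      mul_comm, ← sq, hDK]
  · simp only [sum_boole, Nat.cast_id]
    refine modEq_ite_of_addCases (fun i j => #{t | S t (e i) (e j)}) (fun a a' => ?_)
      (fun c c' => ?_) (fun a c => ?_) (fun c a => ?_) i j
    · simpa [e, S, designRel] using hsize (a + a')
    · simp [e, S, card_shiftRel hlatinV.1, Nat.ModEq.refl]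
    · simp [e, S]
    · simp [e, S]

/-- From a Doehlert–Klee design (`V` points, `B` blocks, replication `R`, pair count `L`,
`R² = L·B`) in which every block has size `≡ x (mod w)`, there exists a set of `V`
mutually orthogonal binary frequency squares of type `(B + V·R; B + V·R - R, R)` whose
entrywise integer sum is congruent modulo `w` to the block matrix with `x·J_B` in the
top-left `B × B` corner, `J_{V·R}` in the bottom-right corner, and zeros elsewhere. -/
theorem stmt17 (w x V B R L : ℕ) (hw : 0 < w) (b : Fin B → Finset (Fin V))
    (hR : ∀ p : Fin V, (univ.filter (fun j : Fin B => p ∈ b j)).card = R)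
    (hL : ∀ p q : Fin V, p ≠ q →
      (univ.filter (fun j : Fin B => p ∈ b j ∧ q ∈ b j)).card = L)
    (hDK : R ^ 2 = L * B)
    (hsize : ∀ j : Fin B, (b j).card ≡ x [MOD w]) :
    ∃ F : Fin V → Fin (B + V * R) → Fin (B + V * R) → ℕ,
      (∀ t, IsBFS (B + V * R) R (F t)) ∧
      (∀ s t, s ≠ t → OrthBFS (B + V * R) R R (F s) (F t)) ∧
      (∀ i j : Fin (B + V * R),
        (∑ t, F t i j) ≡
          (if (i : ℕ) < B ∧ (j : ℕ) < B then x
           else if B ≤ (i : ℕ) ∧ B ≤ (j : ℕ) then 1 else 0) [MOD w]) :=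
  stmt17_general w x V B R L b hR hL hDK hsize
end

section
/- Let w be a positive integer. Suppose there exists a family of B subsets (blocks) of a point set {1,…,V} such that every point occurs in exactly R blocks, every pair of distinct points occurs in exactly Λ blocks, R² = Λ·B, and every block has cardinality congruent to w−1 modulo w. Suppose furthermore that at least one of R·B and B² is not divisible by w. Then there exists a type-maximal set of V mutually orthogonal binary frequency squares of type (B+VR; B+VR−R, R), i.e., a set of V pairwise orthogonal binary frequency squares of that type such that no binary frequency square of the same type is orthogonal to all of them. -/
open Finset

abbrev DKI (V B R : ℕ) := Fin B ⊕ (Fin V × Fin R)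

def DKE (V B R : ℕ) : DKI V B R ≃ Fin (B + V * R) :=
  (Equiv.sumCongr (Equiv.refl (Fin B)) finProdFinEquiv).trans finSumFinEquiv

def DKf {V B R : ℕ} (b : Fin B → Finset (Fin V)) (t : Fin V) :
    DKI V B R → DKI V B R → ℕ
  | Sum.inl j, Sum.inl j' => if t ∈ b (j + j') then 1 else 0
  | Sum.inl _, Sum.inr _ => 0
  | Sum.inr _, Sum.inl _ => 0
  | Sum.inr pa, Sum.inr qc => if qc.1 = pa.1 + t then 1 else 0

lemma DKf01 {V B R : ℕ} (b : Fin B → Finset (Fin V)) (t : Fin V) (c d : DKI V B R) :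
    DKf b t c d = 0 ∨ DKf b t c d = 1 := by
  rcases c with j | pa <;> rcases d with j' | qc <;> simp [DKf] <;> exact (em _).symm.imp id id

lemma card_filter_eq_sum_equiv {α β : Type*} [Fintype α] [Fintype β] (e : α ≃ β)
    (P : β → Prop) [DecidablePred P] :
    (univ.filter P).card = ∑ a : α, if P (e a) then 1 else 0 := by
  rw [Finset.card_filter]
  exact (Equiv.sum_comp e fun x => if P x then 1 else 0).symm

lemma card_filter_pair_eq_sum_equiv {α β : Type*} [Fintype α] [Fintype β] (e : α ≃ β)
    (P : β → β → Prop) [∀ i j, Decidable (P i j)] :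
    ((univ : Finset (β × β)).filter fun p => P p.1 p.2).card
      = ∑ c : α, ∑ d : α, if P (e c) (e d) then 1 else 0 := by
  rw [Finset.card_filter, Fintype.sum_prod_type]
  rw [← Equiv.sum_comp e (fun i => ∑ j : β, if P i j then 1 else 0)]
  exact Finset.sum_congr rfl fun c _ =>
    (Equiv.sum_comp e fun j => if P (e c) j then 1 else 0).symm

/-- From a Doehlert–Klee design (`V` points, `B` blocks, replication `R`, pair count `L`,
`R² = L·B`) in which every block has size `≡ w - 1 (mod w)`, and such that at least one of
`R·B` and `B²` is not divisible by `w`, there exists a type-maximal set of `V` mutually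
orthogonal binary frequency squares of type `(B + V·R; B + V·R - R, R)`. -/
theorem stmt18 (w V B R L : ℕ) (hw : 0 < w) (b : Fin B → Finset (Fin V))
    (hR : ∀ p : Fin V, (univ.filter (fun j : Fin B => p ∈ b j)).card = R)
    (hL : ∀ p q : Fin V, p ≠ q →
      (univ.filter (fun j : Fin B => p ∈ b j ∧ q ∈ b j)).card = L)
    (hDK : R ^ 2 = L * B)
    (hsize : ∀ j : Fin B, (b j).card ≡ w - 1 [MOD w])
    (hdiv : ¬ w ∣ R * B ∨ ¬ w ∣ B * B) :
    ∃ F : Fin V → Fin (B + V * R) → Fin (B + V * R) → ℕ,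
      (∀ t, IsBFS (B + V * R) R (F t)) ∧
      (∀ s t, s ≠ t → OrthBFS (B + V * R) R R (F s) (F t)) ∧
      ¬ ∃ G : Fin (B + V * R) → Fin (B + V * R) → ℕ,
        IsBFS (B + V * R) R G ∧ ∀ t, OrthBFS (B + V * R) R R (F t) G := by

  classical
  have hB : B ≠ 0 := by
    rintro rfl
    rcases hdiv with h | h <;> simp at h
  haveI : NeZero B := ⟨hB⟩
  -- basic divisibility facts
  have hw1 : ∀ m : Fin B, w ∣ (b m).card + 1 := by
    intro m
    have h := (hsize m).add_right 1
    rw [Nat.sub_add_cancel hw] at h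
    exact (Nat.modEq_zero_iff_dvd).mp (h.trans ((Nat.modEq_zero_iff_dvd).mpr dvd_rfl))
  have hVR : (∑ j : Fin B, (b j).card) = V * R := by
    have hc : ∀ j : Fin B, (b j).card = ∑ p : Fin V, if p ∈ b j then (1:ℕ) else 0 := by
      intro j
      rw [← Finset.card_filter]
      congr 1
      exact (Finset.filter_univ_mem _).symm
    calc (∑ j : Fin B, (b j).card)
        = ∑ j : Fin B, ∑ p : Fin V, if p ∈ b j then (1:ℕ) else 0 :=
          Finset.sum_congr rfl fun j _ => hc j
      _ = ∑ p : Fin V, ∑ j : Fin B, if p ∈ b j then (1:ℕ) else 0 := Finset.sum_comm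
      _ = ∑ _p : Fin V, R := Finset.sum_congr rfl fun p _ => by
          rw [← Finset.card_filter]; exact hR p
      _ = V * R := by simp [mul_comm]
  have hwn : w ∣ B + V * R := by
    have hsum : (∑ j : Fin B, ((b j).card + 1)) = B + V * R := by
      rw [Finset.sum_add_distrib, hVR]
      simp [add_comm]
    exact hsum ▸ Finset.dvd_sum fun j _ => hw1 j
  -- counting helpers
  have hrowB : ∀ (t : Fin V) (j : Fin B),
      (∑ j' : Fin B, if t ∈ b (j + j') then (1:ℕ) else 0) = R := by
    intro t j
    rw [Fintype.sum_equiv (Equiv.addLeft j)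
        (fun j' => if t ∈ b (j + j') then (1:ℕ) else 0)
        (fun m => if t ∈ b m then (1:ℕ) else 0) (fun j' => by simp [Equiv.addLeft])]
    rw [← Finset.card_filter]; exact hR t
  have hcolB : ∀ (t : Fin V) (j' : Fin B),
      (∑ j : Fin B, if t ∈ b (j + j') then (1:ℕ) else 0) = R := by
    intro t j'
    rw [Fintype.sum_equiv (Equiv.addRight j')
        (fun j => if t ∈ b (j + j') then (1:ℕ) else 0)
        (fun m => if t ∈ b m then (1:ℕ) else 0) (fun j => by simp [Equiv.addRight])]
    rw [← Finset.card_filter]; exact hR t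
  have hpairB : ∀ (s t : Fin V), s ≠ t → ∀ j : Fin B,
      (∑ j' : Fin B, if s ∈ b (j + j') ∧ t ∈ b (j + j') then (1:ℕ) else 0) = L := by
    intro s t hst j
    rw [Fintype.sum_equiv (Equiv.addLeft j)
        (fun j' => if s ∈ b (j + j') ∧ t ∈ b (j + j') then (1:ℕ) else 0)
        (fun m => if s ∈ b m ∧ t ∈ b m then (1:ℕ) else 0) (fun j' => by simp [Equiv.addLeft])]
    rw [← Finset.card_filter]; exact hL s t hst
  have hmemcard : ∀ m : Fin B, (∑ t : Fin V, if t ∈ b m then (1:ℕ) else 0) = (b m).card := by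
    intro m
    rw [← Finset.card_filter]
    congr 1
    exact Finset.filter_univ_mem _
  set E := DKE V B R with hE
  refine ⟨fun t i j => DKf b t (E.symm i) (E.symm j), ?_, ?_, ?_⟩
  · -- each F t is a BFS
    intro t
    refine ⟨fun i j => DKf01 b t _ _, ?_, ?_⟩
    · intro i
      rw [card_filter_eq_sum_equiv E (fun j => DKf b t (E.symm i) (E.symm j) = 1)]
      simp only [Equiv.symm_apply_apply]
      rcases hci : E.symm i with j₀ | ⟨p, a⟩
      · rw [Fintype.sum_sum_type]
        have h1 : (∑ j' : Fin B, if DKf b t (Sum.inl j₀ : DKI V B R) (Sum.inl j') = 1 then (1:ℕ) else 0)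
            = ∑ j' : Fin B, if t ∈ b (j₀ + j') then (1:ℕ) else 0 := by
          refine Finset.sum_congr rfl fun j' _ => ?_
          by_cases h : t ∈ b (j₀ + j') <;> simp [DKf, h]
        have h2 : (∑ qc : Fin V × Fin R,
            if DKf b t (Sum.inl j₀) (Sum.inr qc) = 1 then (1:ℕ) else 0) = 0 := by
          simp [DKf]
        rw [h1, h2, hrowB t j₀, add_zero]
      · haveI : NeZero V := ⟨fun h => (h ▸ p).elim0⟩
        rw [Fintype.sum_sum_type]
        have h1 : (∑ j' : Fin B,
            if DKf b t (Sum.inr (p, a)) (Sum.inl j') = 1 then (1:ℕ) else 0) = 0 := by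
          simp [DKf]
        have h2 : (∑ qc : Fin V × Fin R,
            if DKf b t (Sum.inr (p, a)) (Sum.inr qc) = 1 then (1:ℕ) else 0)
            = ∑ qc : Fin V × Fin R, if qc.1 = p + t then (1:ℕ) else 0 := by
          refine Finset.sum_congr rfl fun qc _ => ?_
          by_cases h : qc.1 = p + t <;> simp [DKf, h]
        rw [h1, h2, Fintype.sum_prod_type, zero_add]
        have h3 : ∀ q : Fin V, (∑ _c : Fin R, if q = p + t then (1:ℕ) else 0)
            = if q = p + t then R else 0 := by
          intro q; split_ifs <;> simp
        rw [Finset.sum_congr rfl fun q _ => h3 q,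
          Finset.sum_ite_eq' univ (p + t) (fun _ => R)]
        rw [if_pos (Finset.mem_univ _)]
    · intro j
      rw [card_filter_eq_sum_equiv E (fun i => DKf b t (E.symm i) (E.symm j) = 1)]
      simp only [Equiv.symm_apply_apply]
      rcases hcj : E.symm j with j₀ | ⟨q, c⟩
      · rw [Fintype.sum_sum_type]
        have h1 : (∑ j' : Fin B, if DKf b t (Sum.inl j' : DKI V B R) (Sum.inl j₀) = 1 then (1:ℕ) else 0)
            = ∑ j' : Fin B, if t ∈ b (j' + j₀) then (1:ℕ) else 0 := by
          refine Finset.sum_congr rfl fun j' _ => ?_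
          by_cases h : t ∈ b (j' + j₀) <;> simp [DKf, h]
        have h2 : (∑ pa : Fin V × Fin R,
            if DKf b t (Sum.inr pa) (Sum.inl j₀) = 1 then (1:ℕ) else 0) = 0 := by
          simp [DKf]
        rw [h1, h2, hcolB t j₀, add_zero]
      · haveI : NeZero V := ⟨fun h => (h ▸ q).elim0⟩
        rw [Fintype.sum_sum_type]
        have h1 : (∑ j' : Fin B,
            if DKf b t (Sum.inl j') (Sum.inr (q, c)) = 1 then (1:ℕ) else 0) = 0 := by
          simp [DKf]
        have h2 : (∑ pa : Fin V × Fin R,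
            if DKf b t (Sum.inr pa) (Sum.inr (q, c)) = 1 then (1:ℕ) else 0)
            = ∑ pa : Fin V × Fin R, if pa.1 = q - t then (1:ℕ) else 0 := by
          refine Finset.sum_congr rfl fun pa _ => ?_
          have hiff : (q = pa.1 + t) ↔ (pa.1 = q - t) := by
            rw [eq_sub_iff_add_eq, eq_comm]
          simp only [DKf]
          by_cases h : pa.1 = q - t
          · rw [if_pos h]
            simp [hiff.mpr h]
          · rw [if_neg h]
            simp [show ¬ q = pa.1 + t from fun hh => h (hiff.mp hh)]
        rw [h1, h2, Fintype.sum_prod_type, zero_add]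
        have h3 : ∀ p : Fin V, (∑ _a : Fin R, if p = q - t then (1:ℕ) else 0)
            = if p = q - t then R else 0 := by
          intro p; split_ifs <;> simp
        rw [Finset.sum_congr rfl fun p _ => h3 p,
          Finset.sum_ite_eq' univ (q - t) (fun _ => R)]
        rw [if_pos (Finset.mem_univ _)]
  · -- pairwise orthogonality
    intro s t hst
    haveI : NeZero V := ⟨fun h => (h ▸ s).elim0⟩
    unfold OrthBFS
    rw [card_filter_pair_eq_sum_equiv E
      (fun i j => DKf b s (E.symm i) (E.symm j) = 1 ∧ DKf b t (E.symm i) (E.symm j) = 1)]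
    simp only [Equiv.symm_apply_apply]
    rw [Fintype.sum_sum_type]
    have hbl : (∑ j : Fin B, ∑ d : DKI V B R,
        if DKf b s (Sum.inl j) d = 1 ∧ DKf b t (Sum.inl j) d = 1 then (1:ℕ) else 0)
        = B * L := by
      have hj : ∀ j : Fin B, (∑ d : DKI V B R,
          if DKf b s (Sum.inl j) d = 1 ∧ DKf b t (Sum.inl j) d = 1 then (1:ℕ) else 0) = L := by
        intro j
        rw [Fintype.sum_sum_type]
        have h1 : (∑ j' : Fin B,
            if DKf b s (Sum.inl j : DKI V B R) (Sum.inl j') = 1 ∧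
              DKf b t (Sum.inl j : DKI V B R) (Sum.inl j') = 1
            then (1:ℕ) else 0)
            = ∑ j' : Fin B, if s ∈ b (j + j') ∧ t ∈ b (j + j') then (1:ℕ) else 0 := by
          refine Finset.sum_congr rfl fun j' _ => ?_
          by_cases h1 : s ∈ b (j + j') <;> by_cases h2 : t ∈ b (j + j') <;>
            simp [DKf, h1, h2]
        have h2 : (∑ qc : Fin V × Fin R,
            if DKf b s (Sum.inl j) (Sum.inr qc) = 1 ∧ DKf b t (Sum.inl j) (Sum.inr qc) = 1
            then (1:ℕ) else 0) = 0 := by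
          simp [DKf]
        rw [h1, h2, hpairB s t hst j, add_zero]
      rw [Finset.sum_congr rfl fun j _ => hj j]
      simp [mul_comm]
    have hpt : (∑ pa : Fin V × Fin R, ∑ d : DKI V B R,
        if DKf b s (Sum.inr pa) d = 1 ∧ DKf b t (Sum.inr pa) d = 1 then (1:ℕ) else 0)
        = 0 := by
      refine Finset.sum_eq_zero fun pa _ => Finset.sum_eq_zero fun d _ => ?_
      rcases d with j' | qc
      · simp [DKf]
      · have : ¬ (qc.1 = pa.1 + s ∧ qc.1 = pa.1 + t) := by
          rintro ⟨h1, h2⟩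
          exact hst (by rwa [h1, add_right_inj] at h2)
        rw [if_neg]
        rintro ⟨h1, h2⟩
        simp only [DKf] at h1 h2
        by_cases hh1 : qc.1 = pa.1 + s
        · by_cases hh2 : qc.1 = pa.1 + t
          · exact this ⟨hh1, hh2⟩
          · rw [if_neg hh2] at h2; exact Nat.zero_ne_one h2
        · rw [if_neg hh1] at h1; exact Nat.zero_ne_one h1
    rw [hbl, hpt, add_zero]
    have : R * R = L * B := by rw [← hDK]; ring
    rw [this, mul_comm]
  · -- maximality
    rintro ⟨G, ⟨hG01, hGrow, hGcol⟩, hOrth⟩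
    set gg : DKI V B R → DKI V B R → ℕ :=
      fun c d => if G (E c) (E d) = 1 then 1 else 0 with hgg
    have hgrow : ∀ c : DKI V B R, (∑ d : DKI V B R, gg c d) = R := by
      intro c
      have h := hGrow (E c)
      rw [card_filter_eq_sum_equiv E (fun j => G (E c) j = 1)] at h
      exact h
    have hgcol : ∀ d : DKI V B R, (∑ c : DKI V B R, gg c d) = R := by
      intro d
      have h := hGcol (E d)
      rw [card_filter_eq_sum_equiv E (fun i => G i (E d) = 1)] at h
      exact h
    have horth : ∀ t : Fin V,
        (∑ c : DKI V B R, ∑ d : DKI V B R, DKf b t c d * gg c d) = R * R := by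
      intro t
      have h := hOrth t
      unfold OrthBFS at h
      rw [card_filter_pair_eq_sum_equiv E
        (fun i j => DKf b t (E.symm i) (E.symm j) = 1 ∧ G i j = 1)] at h
      simp only [Equiv.symm_apply_apply] at h
      rw [← h]
      refine Finset.sum_congr rfl fun c _ => Finset.sum_congr rfl fun d _ => ?_
      rcases DKf01 b t c d with h0 | h0 <;> rw [h0] <;> by_cases hg : G (E c) (E d) = 1 <;>
        simp [hgg, hg]
    -- region sums
    set A : ℕ := ∑ j : Fin B, ∑ j' : Fin B, gg (Sum.inl j) (Sum.inl j') with hA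
    set C2 : ℕ := ∑ pa : Fin V × Fin R, ∑ j' : Fin B, gg (Sum.inr pa) (Sum.inl j') with hC2
    set D : ℕ := ∑ pa : Fin V × Fin R, ∑ qc : Fin V × Fin R,
      gg (Sum.inr pa) (Sum.inr qc) with hD
    set S : ℕ := ∑ j : Fin B, ∑ j' : Fin B,
      (b (j + j')).card * gg (Sum.inl j) (Sum.inl j') with hS
    -- column equation: A + C2 = B * R
    have h2 : A + C2 = B * R := by
      have hcol : ∀ j' : Fin B,
          (∑ j : Fin B, gg (Sum.inl j) (Sum.inl j'))
            + (∑ pa : Fin V × Fin R, gg (Sum.inr pa) (Sum.inl j')) = R := by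
        intro j'
        rw [← Fintype.sum_sum_type (fun c => gg c (Sum.inl j'))]
        exact hgcol (Sum.inl j')
      calc A + C2
          = (∑ j' : Fin B, ∑ j : Fin B, gg (Sum.inl j) (Sum.inl j'))
            + ∑ j' : Fin B, ∑ pa : Fin V × Fin R, gg (Sum.inr pa) (Sum.inl j') := by
            rw [hA, hC2]; rw [Finset.sum_comm (s := univ) (t := univ)]
            congr 1
            exact Finset.sum_comm
        _ = ∑ j' : Fin B, ((∑ j : Fin B, gg (Sum.inl j) (Sum.inl j'))
            + ∑ pa : Fin V × Fin R, gg (Sum.inr pa) (Sum.inl j')) :=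
            (Finset.sum_add_distrib).symm
        _ = ∑ _j' : Fin B, R := Finset.sum_congr rfl fun j' _ => hcol j'
        _ = B * R := by simp [mul_comm]
    -- point-row equation: C2 + D = V * R * R
    have h3 : C2 + D = V * R * R := by
      have hrow : ∀ pa : Fin V × Fin R,
          (∑ j' : Fin B, gg (Sum.inr pa) (Sum.inl j'))
            + (∑ qc : Fin V × Fin R, gg (Sum.inr pa) (Sum.inr qc)) = R := by
        intro pa
        rw [← Fintype.sum_sum_type (fun d => gg (Sum.inr pa) d)]
        exact hgrow (Sum.inr pa)
      calc C2 + D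
          = ∑ pa : Fin V × Fin R, ((∑ j' : Fin B, gg (Sum.inr pa) (Sum.inl j'))
            + ∑ qc : Fin V × Fin R, gg (Sum.inr pa) (Sum.inr qc)) := by
            rw [hC2, hD]; exact (Finset.sum_add_distrib).symm
        _ = ∑ _pa : Fin V × Fin R, R := Finset.sum_congr rfl fun pa _ => hrow pa
        _ = V * R * R := by simp [Finset.card_univ, mul_comm, mul_assoc]
    -- summed orthogonality: S + D = V * (R * R)
    have h4 : S + D = V * (R * R) := by
      have hsum : (∑ t : Fin V, ∑ c : DKI V B R, ∑ d : DKI V B R, DKf b t c d * gg c d)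
          = V * (R * R) := by
        rw [Finset.sum_congr rfl fun t _ => horth t]
        simp [mul_comm]
      rw [← hsum]
      rw [Finset.sum_comm]
      have hcell : ∀ c : DKI V B R,
          (∑ t : Fin V, ∑ d : DKI V B R, DKf b t c d * gg c d)
          = ∑ d : DKI V B R, (∑ t : Fin V, DKf b t c d) * gg c d := by
        intro c
        rw [Finset.sum_comm]
        exact Finset.sum_congr rfl fun d _ => (Finset.sum_mul _ _ _).symm
      rw [Finset.sum_congr rfl fun c _ => hcell c]
      rw [Fintype.sum_sum_type]
      have hblk : ∀ j : Fin B,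
          (∑ d : DKI V B R, (∑ t : Fin V, DKf b t (Sum.inl j) d) * gg (Sum.inl j) d)
          = ∑ j' : Fin B, (b (j + j')).card * gg (Sum.inl j) (Sum.inl j') := by
        intro j
        rw [Fintype.sum_sum_type]
        have hz : (∑ qc : Fin V × Fin R,
            (∑ t : Fin V, DKf b t (Sum.inl j) (Sum.inr qc)) * gg (Sum.inl j) (Sum.inr qc))
            = 0 := by
          refine Finset.sum_eq_zero fun qc _ => ?_
          simp [DKf]
        rw [hz, add_zero]
        refine Finset.sum_congr rfl fun j' _ => ?_
        congr 1
        rw [← hmemcard (j + j')]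
        refine Finset.sum_congr rfl fun t _ => ?_
        by_cases h : t ∈ b (j + j') <;> simp [DKf, h]
      have hptc : ∀ pa : Fin V × Fin R,
          (∑ d : DKI V B R, (∑ t : Fin V, DKf b t (Sum.inr pa) d) * gg (Sum.inr pa) d)
          = ∑ qc : Fin V × Fin R, gg (Sum.inr pa) (Sum.inr qc) := by
        intro pa
        haveI : NeZero V := ⟨fun h => (h ▸ pa.1).elim0⟩
        rw [Fintype.sum_sum_type]
        have hz : (∑ j' : Fin B,
            (∑ t : Fin V, DKf b t (Sum.inr pa) (Sum.inl j')) * gg (Sum.inr pa) (Sum.inl j'))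
            = 0 := by
          refine Finset.sum_eq_zero fun j' _ => ?_
          simp [DKf]
        rw [hz, zero_add]
        refine Finset.sum_congr rfl fun qc _ => ?_
        have hone : (∑ t : Fin V, DKf b t (Sum.inr pa) (Sum.inr qc)) = 1 := by
          have : ∀ t : Fin V, DKf b t (Sum.inr pa) (Sum.inr qc)
              = if t = qc.1 - pa.1 then (1:ℕ) else 0 := by
            intro t
            have hiff : (qc.1 = pa.1 + t) ↔ (t = qc.1 - pa.1) := by
              rw [eq_sub_iff_add_eq, add_comm, eq_comm]
            simp only [DKf]
            by_cases h : t = qc.1 - pa.1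
            · rw [if_pos h, if_pos (hiff.mpr h)]
            · rw [if_neg h, if_neg (fun hh => h (hiff.mp hh))]
          rw [Finset.sum_congr rfl fun t _ => this t,
            Finset.sum_ite_eq' univ (qc.1 - pa.1) (fun _ => (1:ℕ))]
          rw [if_pos (Finset.mem_univ _)]
        rw [hone, one_mul]
      rw [Finset.sum_congr rfl fun j _ => hblk j,
        Finset.sum_congr rfl fun pa _ => hptc pa]
    -- conclude S = C2, then A + S = B * R
    have hSC2 : S = C2 := by
      have : S + D = C2 + D := by
        rw [h4, h3]; ring
      exact Nat.add_right_cancel this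
    have hAS : S + A = B * R := by
      rw [hSC2]
      rw [add_comm]
      exact h2
    have hwBR : w ∣ B * R := by
      have hSA : (∑ j : Fin B, ∑ j' : Fin B,
          ((b (j + j')).card + 1) * gg (Sum.inl j) (Sum.inl j')) = B * R := by
        rw [← hAS, hS, hA]
        rw [← Finset.sum_add_distrib]
        refine Finset.sum_congr rfl fun j _ => ?_
        rw [← Finset.sum_add_distrib]
        refine Finset.sum_congr rfl fun j' _ => ?_
        ring
      exact hSA ▸ Finset.dvd_sum fun j _ => Finset.dvd_sum fun j' _ =>
        Dvd.dvd.mul_right (hw1 (j + j')) _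
    have hwB2 : w ∣ B * B := by
      have h5 : (B + V * R) * B = B * B + V * (R * B) := by ring
      have h6 : w ∣ B * B + V * (R * B) := h5 ▸ hwn.mul_right B
      have h7 : w ∣ V * (R * B) := Dvd.dvd.mul_left (by rwa [mul_comm] at hwBR) V
      rw [add_comm] at h6
      exact (Nat.dvd_add_right h7).mp h6
    rcases hdiv with h | h
    · exact h (by rwa [mul_comm] at hwBR)
    · exact h hwB2
end
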